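/- arXiv:1802.06340 — 5 statements merged into one kernel-verified Lean document; each statement's English description precedes it below -/
import Mathlib

section
/- Let $p_0$ and $p$ be twice continuously differentiable, strictly positive probability densities on $\mathbb{R}_+^m=(0,\infty)^m$, and let $h_1,\dots,h_m:(0,\infty)\to(0,\infty)$ be differentiable. Assume the boundary condition (A1): for every $j$ and almost every fixed $x_{-j}\in(0,\infty)^{m-1}$, $p_0(x)\,h_j(x_j)\,\partial_j\log p(x)\to 0$ as $x_j\to\infty$ and as $x_j\to 0^+$, and the same with $p$ replaced by $p_0$; and the integrability condition (A2): $\int p_0(x)\sum_j h_j(x_j)(\partial_j\log p(x))^2\,dx<\infty$, $\int p_0(x)\sum_j |\partial_j(h_j(x_j)\partial_j\log p(x))|\,dx<\infty$, and the same with $p$ replaced by $p_0$. Then the generalized $h$-score matching loss satisfies $J_h(p)=\int_{\mathbb{R}_+^m} p_0(x)\sum_{j=1}^m\big[h_j'(x_j)\partial_j\log p(x)+h_j(x_j)\partial_{jj}\log p(x)+\tfrac12 h_j(x_j)(\partial_j\log p(x))^2\big]dx + C$, where $C=\tfrac12\int_{\mathbb{R}_+^m}p_0(x)\sum_{j=1}^m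 h_j(x_j)(\partial_j\log p_0(x))^2 dx$ does not depend on $p$. -/
open MeasureTheory Filter Topology Set

/-- Partial derivative of `f : ℝ^m → ℝ` in the `j`-th coordinate. -/
noncomputable def pd {m : ℕ} (f : (Fin m → ℝ) → ℝ) (j : Fin m) (x : Fin m → ℝ) : ℝ :=
  deriv (fun t => f (Function.update x j t)) (x j)

/-- Second partial derivative of `f : ℝ^m → ℝ` in the `j`-th coordinate. -/
noncomputable def pd2 {m : ℕ} (f : (Fin m → ℝ) → ℝ) (j : Fin m) (x : Fin m → ℝ) : ℝ :=
  deriv (deriv (fun t => f (Function.update x j t))) (x j)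

lemma pd_update {m : ℕ} (f : (Fin m → ℝ) → ℝ) (j : Fin m) (x : Fin m → ℝ) (t : ℝ) :
    pd f j (Function.update x j t) = deriv (fun s => f (Function.update x j s)) t := by
  simp only [pd, Function.update_idem, Function.update_self]

lemma pd_eq_fderiv {m : ℕ} {f : (Fin m → ℝ) → ℝ} {j : Fin m} {x : Fin m → ℝ}
    (hf : DifferentiableAt ℝ f x) : pd f j x = fderiv ℝ f x (Pi.single j 1) := by
  have h2 : HasDerivAt (fun t => Function.update x j t) (Pi.single j 1) (x j) :=
    hasDerivAt_update x j (x j)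
  have h3 : Function.update x j (x j) = x := Function.update_eq_self j x
  have hf' : HasFDerivAt f (fderiv ℝ f x) (Function.update x j (x j)) := by
    rw [h3]; exact hf.hasFDerivAt
  exact (hf'.comp_hasDerivAt (x j) h2).deriv

lemma hasDerivAt_comp_update {m : ℕ} {f : (Fin m → ℝ) → ℝ} {j : Fin m} {x : Fin m → ℝ} {t : ℝ}
    (hf : DifferentiableAt ℝ f (Function.update x j t)) :
    HasDerivAt (fun s => f (Function.update x j s)) (pd f j (Function.update x j t)) t := by
  have h2 : HasDerivAt (fun s => Function.update x j s) (Pi.single j 1) t := hasDerivAt_update x j t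
  have h := hf.hasFDerivAt.comp_hasDerivAt t h2
  have h' : HasDerivAt (fun s => f (Function.update x j s))
      ((fderiv ℝ f (Function.update x j t)) (Pi.single j 1)) t := h
  rw [pd_update, h'.deriv]
  exact h'

section omega
variable {m : ℕ} {j : Fin m}

lemma omega_isOpen : IsOpen (Set.univ.pi fun _ : Fin m => Ioi (0:ℝ)) :=
  isOpen_set_pi finite_univ fun _ _ => isOpen_Ioi

lemma mem_omega {x : Fin m → ℝ} : x ∈ (Set.univ.pi fun _ : Fin m => Ioi (0:ℝ)) ↔ ∀ i, 0 < x i := by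
  simp [Set.mem_univ_pi, mem_Ioi]

lemma update_mem_omega {x : Fin m → ℝ} (hx : x ∈ (Set.univ.pi fun _ : Fin m => Ioi (0:ℝ)))
    {t : ℝ} (ht : 0 < t) : Function.update x j t ∈ (Set.univ.pi fun _ : Fin m => Ioi (0:ℝ)) := by
  rw [mem_omega] at hx ⊢
  intro i
  rcases eq_or_ne i j with hi | hi
  · subst hi; simpa
  · rw [Function.update_of_ne hi]; exact hx i

end omega

section density
variable {m : ℕ} {f q : (Fin m → ℝ) → ℝ} {j : Fin m} {H : ℝ → ℝ}

lemma pd_eqOn_fderiv (hf : ContDiffOn ℝ 2 f (Set.univ.pi fun _ : Fin m => Ioi (0:ℝ))) :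
    ∀ x ∈ (Set.univ.pi fun _ : Fin m => Ioi (0:ℝ)),
      pd f j x = fderiv ℝ f x (Pi.single j 1) := fun x hx =>
  pd_eq_fderiv ((hf.differentiableOn (by norm_num)).differentiableAt
    (omega_isOpen.mem_nhds hx))

lemma pd_continuousOn (hf : ContDiffOn ℝ 2 f (Set.univ.pi fun _ : Fin m => Ioi (0:ℝ))) :
    ContinuousOn (pd f j) (Set.univ.pi fun _ : Fin m => Ioi (0:ℝ)) := by
  have h1 : ContDiffOn ℝ 1 (fderiv ℝ f) (Set.univ.pi fun _ : Fin m => Ioi (0:ℝ)) :=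
    hf.fderiv_of_isOpen omega_isOpen (by norm_num)
  have h2 : ContinuousOn (fun x => fderiv ℝ f x (Pi.single j 1))
      (Set.univ.pi fun _ : Fin m => Ioi (0:ℝ)) :=
    (ContinuousLinearMap.apply ℝ ℝ (Pi.single j 1 : Fin m → ℝ)).continuous.comp_continuousOn
      h1.continuousOn
  exact h2.congr (pd_eqOn_fderiv hf)

lemma pd_line_eventuallyEq (hf : ContDiffOn ℝ 2 f (Set.univ.pi fun _ : Fin m => Ioi (0:ℝ)))
    {x : Fin m → ℝ} (hx : x ∈ (Set.univ.pi fun _ : Fin m => Ioi (0:ℝ))) :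
    (fun s => pd f j (Function.update x j s)) =ᶠ[𝓝 (x j)]
      (fun s => fderiv ℝ f (Function.update x j s) (Pi.single j 1)) := by
  have hcont : Continuous (fun s : ℝ => Function.update x j s) := (contDiff_update (𝕜 := ℝ) 1 x j).continuous
  have hU : (fun s : ℝ => Function.update x j s) ⁻¹' (Set.univ.pi fun _ : Fin m => Ioi (0:ℝ))
      ∈ 𝓝 (x j) := by
    apply hcont.continuousAt.preimage_mem_nhds
    rw [Function.update_eq_self]
    exact omega_isOpen.mem_nhds hx
  filter_upwards [hU] with s hs
  exact pd_eqOn_fderiv hf _ hs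

lemma diffAt_fderiv_apply (hf : ContDiffOn ℝ 2 f (Set.univ.pi fun _ : Fin m => Ioi (0:ℝ)))
    {x : Fin m → ℝ} (hx : x ∈ (Set.univ.pi fun _ : Fin m => Ioi (0:ℝ))) :
    DifferentiableAt ℝ (fun y => fderiv ℝ f y (Pi.single j 1)) x := by
  have h1 : ContDiffOn ℝ 1 (fun y => fderiv ℝ f y (Pi.single j 1))
      (Set.univ.pi fun _ : Fin m => Ioi (0:ℝ)) :=
    (hf.fderiv_of_isOpen omega_isOpen (by norm_num)).clm_apply contDiffOn_const
  exact (h1.differentiableOn (by norm_num)).differentiableAt (omega_isOpen.mem_nhds hx)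

lemma deriv_line_eq_pd (x : Fin m → ℝ) :
    deriv (fun t => f (Function.update x j t)) = fun s => pd f j (Function.update x j s) :=
  funext fun s => (pd_update f j x s).symm

lemma pd2_eqOn (hf : ContDiffOn ℝ 2 f (Set.univ.pi fun _ : Fin m => Ioi (0:ℝ)))
    {x : Fin m → ℝ} (hx : x ∈ (Set.univ.pi fun _ : Fin m => Ioi (0:ℝ))) :
    pd2 f j x = fderiv ℝ (fun y => fderiv ℝ f y (Pi.single j 1)) x (Pi.single j 1) := by
  have h1 : pd2 f j x = deriv (fun s => pd f j (Function.update x j s)) (x j) := by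
    unfold pd2
    rw [deriv_line_eq_pd (f := f) (j := j) x]
  rw [h1, Filter.EventuallyEq.deriv_eq (pd_line_eventuallyEq hf hx)]
  have h2 := hasDerivAt_comp_update (f := fun y => fderiv ℝ f y (Pi.single j 1))
    (x := x) (t := x j) (by rw [Function.update_eq_self]; exact diffAt_fderiv_apply hf hx)
  rw [h2.deriv, Function.update_eq_self]
  exact pd_eq_fderiv (diffAt_fderiv_apply hf hx)

lemma pd2_continuousOn (hf : ContDiffOn ℝ 2 f (Set.univ.pi fun _ : Fin m => Ioi (0:ℝ))) :
    ContinuousOn (pd2 f j) (Set.univ.pi fun _ : Fin m => Ioi (0:ℝ)) := by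
  have h1 : ContDiffOn ℝ 1 (fun y => fderiv ℝ f y (Pi.single j 1))
      (Set.univ.pi fun _ : Fin m => Ioi (0:ℝ)) :=
    (hf.fderiv_of_isOpen omega_isOpen (by norm_num)).clm_apply contDiffOn_const
  have h2 : ContinuousOn (fun x => fderiv ℝ (fun y => fderiv ℝ f y (Pi.single j 1)) x
      (Pi.single j 1)) (Set.univ.pi fun _ : Fin m => Ioi (0:ℝ)) :=
    ((h1.fderiv_of_isOpen (m := 0) omega_isOpen (by norm_num)).clm_apply
      contDiffOn_const).continuousOn
  exact h2.congr fun x hx => pd2_eqOn hf hx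

lemma hasDerivAt_pd_line (hf : ContDiffOn ℝ 2 f (Set.univ.pi fun _ : Fin m => Ioi (0:ℝ)))
    {x : Fin m → ℝ} (hx : x ∈ (Set.univ.pi fun _ : Fin m => Ioi (0:ℝ))) :
    HasDerivAt (fun s => pd f j (Function.update x j s)) (pd2 f j x) (x j) := by
  have h2 : HasDerivAt (fun s => fderiv ℝ f (Function.update x j s) (Pi.single j 1))
      (pd (fun y => fderiv ℝ f y (Pi.single j 1)) j x) (x j) := by
    have := hasDerivAt_comp_update (f := fun y => fderiv ℝ f y (Pi.single j 1))
      (x := x) (t := x j) (by rw [Function.update_eq_self]; exact diffAt_fderiv_apply hf hx)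
    rwa [Function.update_eq_self] at this
  have h3 : pd (fun y => fderiv ℝ f y (Pi.single j 1)) j x = pd2 f j x := by
    rw [pd_eq_fderiv (diffAt_fderiv_apply hf hx), pd2_eqOn hf hx]
  rw [h3] at h2
  exact h2.congr_of_eventuallyEq (pd_line_eventuallyEq hf hx)

lemma hasDerivAt_hS (hf : ContDiffOn ℝ 2 f (Set.univ.pi fun _ : Fin m => Ioi (0:ℝ)))
    (hh : DifferentiableOn ℝ H (Ioi 0))
    {x : Fin m → ℝ} (hx : x ∈ (Set.univ.pi fun _ : Fin m => Ioi (0:ℝ))) :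
    HasDerivAt (fun s => H s * pd f j (Function.update x j s))
      (deriv H (x j) * pd f j x + H (x j) * pd2 f j x) (x j) := by
  have hHj : HasDerivAt H (deriv H (x j)) (x j) :=
    (hh.differentiableAt (isOpen_Ioi.mem_nhds (mem_omega.mp hx j))).hasDerivAt
  have := hHj.mul (hasDerivAt_pd_line hf hx)
  rwa [Function.update_eq_self] at this

lemma pd_hS_eq (hf : ContDiffOn ℝ 2 f (Set.univ.pi fun _ : Fin m => Ioi (0:ℝ)))
    (hh : DifferentiableOn ℝ H (Ioi 0))
    {x : Fin m → ℝ} (hx : x ∈ (Set.univ.pi fun _ : Fin m => Ioi (0:ℝ))) :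
    pd (fun y => H (y j) * pd f j y) j x
      = deriv H (x j) * pd f j x + H (x j) * pd2 f j x := by
  have h1 : (fun t => (fun y => H (y j) * pd f j y) (Function.update x j t))
      = fun t => H t * pd f j (Function.update x j t) := by
    funext t; simp [Function.update_self]
  rw [pd, h1]
  exact (hasDerivAt_hS hf hh hx).deriv

lemma hasDerivAt_line_q (hq : ContDiffOn ℝ 2 q (Set.univ.pi fun _ : Fin m => Ioi (0:ℝ)))
    {x : Fin m → ℝ} (hx : x ∈ (Set.univ.pi fun _ : Fin m => Ioi (0:ℝ))) :
    HasDerivAt (fun s => q (Function.update x j s)) (pd q j x) (x j) := by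
  have := hasDerivAt_comp_update (f := q) (x := x) (t := x j)
    (by rw [Function.update_eq_self]
        exact (hq.differentiableOn (by norm_num)).differentiableAt (omega_isOpen.mem_nhds hx))
  rwa [Function.update_eq_self] at this

lemma pd_log_eq (hq : ContDiffOn ℝ 2 q (Set.univ.pi fun _ : Fin m => Ioi (0:ℝ)))
    (hqpos : ∀ x ∈ (Set.univ.pi fun _ : Fin m => Ioi (0:ℝ)), 0 < q x)
    {x : Fin m → ℝ} (hx : x ∈ (Set.univ.pi fun _ : Fin m => Ioi (0:ℝ))) :
    pd (fun y => Real.log (q y)) j x = pd q j x / q x := by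
  have h1 := (hasDerivAt_line_q (j := j) hq hx).log
    (by rw [Function.update_eq_self]; exact ne_of_gt (hqpos x hx))
  rw [Function.update_eq_self] at h1
  have h2 : pd (fun y => Real.log (q y)) j x
      = deriv (fun s => Real.log (q (Function.update x j s))) (x j) := rfl
  rw [h2, h1.deriv]

lemma hasDerivAt_slice {p0 : (Fin m → ℝ) → ℝ}
    (hp0 : ContDiffOn ℝ 2 p0 (Set.univ.pi fun _ : Fin m => Ioi (0:ℝ)))
    (hf : ContDiffOn ℝ 2 f (Set.univ.pi fun _ : Fin m => Ioi (0:ℝ)))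
    (hh : DifferentiableOn ℝ H (Ioi 0))
    {y : Fin m → ℝ} (hy : y ∈ (Set.univ.pi fun _ : Fin m => Ioi (0:ℝ))) :
    HasDerivAt (fun s => p0 (Function.update y j s) * (H s * pd f j (Function.update y j s)))
      (pd p0 j y * (H (y j) * pd f j y)
        + p0 y * (deriv H (y j) * pd f j y + H (y j) * pd2 f j y)) (y j) := by
  have h1 := (hasDerivAt_line_q (j := j) hp0 hy).mul (hasDerivAt_hS (j := j) hf hh hy)
  rwa [Function.update_eq_self] at h1
end density

instance uniqueCompl {m : ℕ} (j : Fin m) : Unique {i : Fin m // ¬ i ≠ j} :=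
  ⟨⟨⟨j, not_not_intro rfl⟩⟩, fun a => Subtype.ext (not_not.mp a.2)⟩

lemma mp_funUnique {α : Type*} [u : Unique α] [f : Fintype α] :
    MeasurePreserving (MeasurableEquiv.funUnique α ℝ) volume volume := by
  obtain rfl := Subsingleton.elim f (@Unique.fintype _ u)
  exact volume_preserving_funUnique α ℝ

lemma slice_zero {m : ℕ} (j : Fin m) (G : (Fin m → ℝ) → ℝ)
    (hG : IntegrableOn G (Set.univ.pi fun _ : Fin m => Ioi (0:ℝ)))
    (hz : ∀ᵐ x ∂(volume.restrict (Set.univ.pi fun _ : Fin m => Ioi (0:ℝ))),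
      IntegrableOn (fun t => G (Function.update x j t)) (Ioi 0) →
      ∫ t in Ioi 0, G (Function.update x j t) = 0) :
    ∫ x in (Set.univ.pi fun _ : Fin m => Ioi (0:ℝ)), G x = 0 := by
  classical
  set Ω : Set (Fin m → ℝ) := Set.univ.pi fun _ : Fin m => Ioi (0:ℝ) with hΩ
  have hΩmeas : MeasurableSet Ω := MeasurableSet.univ_pi fun _ => measurableSet_Ioi
  set E : (Fin m → ℝ) ≃ᵐ ({i : Fin m // i ≠ j} → ℝ) × ℝ :=
    (MeasurableEquiv.piEquivPiSubtypeProd (fun _ : Fin m => ℝ) (fun i => i ≠ j)).trans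
      ((MeasurableEquiv.refl _).prodCongr (MeasurableEquiv.funUnique _ ℝ)) with hE
  have hMP : MeasurePreserving E volume
      ((volume : Measure ({i : Fin m // i ≠ j} → ℝ)).prod (volume : Measure ℝ)) := by
    have h1 := volume_preserving_piEquivPiSubtypeProd (fun _ : Fin m => ℝ) (fun i => i ≠ j)
    have h2 : MeasurePreserving ((MeasurableEquiv.refl ({i : Fin m // i ≠ j} → ℝ)).prodCongr
        (MeasurableEquiv.funUnique {i : Fin m // ¬ i ≠ j} ℝ)) volume
        ((volume : Measure ({i : Fin m // i ≠ j} → ℝ)).prod (volume : Measure ℝ)) :=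
      (MeasurePreserving.id volume).prod (mp_funUnique)
    exact h2.comp h1
  have hEapp : ∀ x : Fin m → ℝ, E x = (fun i : {i : Fin m // i ≠ j} => x i, x j) := fun _ => rfl
  have hEsymm : ∀ (y : {i : Fin m // i ≠ j} → ℝ) (t : ℝ),
      E.symm (y, t) = fun i => if h : i ≠ j then y ⟨i, h⟩ else t := fun _ _ => rfl
  have hupdate : ∀ (y : {i : Fin m // i ≠ j} → ℝ) (s t : ℝ),
      Function.update (E.symm (y, s)) j t = E.symm (y, t) := by
    intro y s t
    funext i
    rcases eq_or_ne i j with hi | hi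
    · subst hi; simp [hEsymm]
    · rw [Function.update_of_ne hi]; simp [hEsymm, hi]
  set T : Set ({i : Fin m // i ≠ j} → ℝ) := Set.univ.pi fun _ => Ioi (0:ℝ) with hT
  have hTmeas : MeasurableSet T := MeasurableSet.univ_pi fun _ => measurableSet_Ioi
  have hpre : E ⁻¹' (T ×ˢ Ioi (0:ℝ)) = Ω := by
    ext x
    simp only [mem_preimage, hEapp, mem_prod, hT, hΩ, Set.mem_univ_pi, mem_Ioi]
    constructor
    · rintro ⟨h1, h2⟩ i
      rcases eq_or_ne i j with hi | hi
      · subst hi; exact h2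
      · exact h1 ⟨i, hi⟩
    · intro hx
      exact ⟨fun i => hx i, hx j⟩
  have MPr : MeasurePreserving E (volume.restrict Ω)
      ((((volume : Measure ({i : Fin m // i ≠ j} → ℝ)).prod (volume : Measure ℝ))).restrict
        (T ×ˢ Ioi (0:ℝ))) := by
    have := hMP.restrict_preimage (s := T ×ˢ Ioi (0:ℝ)) (hTmeas.prod measurableSet_Ioi)
    rwa [hpre] at this
  have hint2 : Integrable (fun z : ({i : Fin m // i ≠ j} → ℝ) × ℝ => G (E.symm z))
      ((volume.restrict T).prod (volume.restrict (Ioi (0:ℝ)))) := by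
    rw [Measure.prod_restrict]
    rw [← MPr.integrable_comp_emb E.measurableEmbedding]
    have he : ((fun z : ({i : Fin m // i ≠ j} → ℝ) × ℝ => G (E.symm z)) ∘ E) = G := by
      funext x; simp
    rwa [he]
  have hIeq : ∫ x in Ω, G x
      = ∫ y in T, (∫ t in Ioi (0:ℝ), G (E.symm (y, t))) := by
    have h0 : ∫ x in Ω, G x = ∫ x in E ⁻¹' (T ×ˢ Ioi (0:ℝ)), G (E.symm (E x)) := by
      rw [hpre]; refine (setIntegral_congr_fun hΩmeas fun x _ => ?_).symm; simp
    rw [h0, hMP.setIntegral_preimage_emb E.measurableEmbedding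
      (fun z => G (E.symm z)) (T ×ˢ Ioi (0:ℝ))]
    rw [← Measure.prod_restrict]
    exact integral_prod _ hint2
  -- transfer the a.e. hypothesis
  have hzz : ∀ᵐ z ∂((volume.restrict T).prod (volume.restrict (Ioi (0:ℝ)))),
      (IntegrableOn (fun t => G (Function.update (E.symm z) j t)) (Ioi 0) →
        ∫ t in Ioi 0, G (Function.update (E.symm z) j t) = 0) := by
    rw [Measure.prod_restrict]
    exact ((MPr.symm E).quasiMeasurePreserving.ae hz)
  have hae1 := Measure.ae_ae_of_ae_prod hzz
  have hae2 := hint2.prod_right_ae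
  have hinner : ∀ᵐ y ∂(volume.restrict T), (∫ t in Ioi (0:ℝ), G (E.symm (y, t))) = 0 := by
    filter_upwards [hae1, hae2] with y hy hyint
    have hne : NeBot (ae (volume.restrict (Ioi (0:ℝ)))) := by
      refine ae_neBot.mpr ?_
      simp [Measure.restrict_apply_univ, Ne, ← Measure.measure_univ_eq_zero]
    obtain ⟨t, ht⟩ := hy.exists
    simp only [hupdate y t] at ht
    exact ht hyint
  rw [hIeq]
  rw [integral_congr_ae hinner]
  simp

lemma integral_deriv_zero (F F' : ℝ → ℝ)
    (hderiv : ∀ t ∈ Ioi (0:ℝ), HasDerivAt F (F' t) t)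
    (hint : IntegrableOn F' (Ioi 0))
    (htop : Tendsto F atTop (𝓝 0)) (h0 : Tendsto F (𝓝[>] 0) (𝓝 0)) :
    ∫ t in Ioi (0:ℝ), F' t = 0 := by
  have key : ∀ a : ℝ, 0 < a → ∫ t in Ioi a, F' t = - F a := by
    intro a ha
    have := integral_Ioi_of_hasDerivAt_of_tendsto (f := F) (f' := F') (a := a)
      ((hderiv a ha).continuousAt.continuousWithinAt)
      (fun x hx => hderiv x (ha.trans hx))
      (hint.mono_set (fun x hx => ha.trans hx)) htop
    rw [this]; ring
  set s : ℕ → Set ℝ := fun n => Ioi (1/(n+1) : ℝ) with hs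
  have hposn : ∀ n : ℕ, (0:ℝ) < 1/(n+1) := by
    intro n; positivity
  have hmono : Monotone s := by
    intro a b hab
    apply Ioi_subset_Ioi
    apply one_div_le_one_div_of_le (by positivity)
    have : (a:ℝ) ≤ b := Nat.cast_le.mpr hab
    linarith
  have hunion : ⋃ n, s n = Ioi (0:ℝ) := by
    ext t
    simp only [mem_iUnion, hs, mem_Ioi]
    constructor
    · rintro ⟨n, hn⟩; exact (hposn n).trans hn
    · intro ht
      obtain ⟨n, hn⟩ := exists_nat_one_div_lt ht
      exact ⟨n, hn⟩
  have h1 := tendsto_setIntegral_of_monotone (fun n => measurableSet_Ioi) hmono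
    (by rw [hunion]; exact hint)
  rw [hunion] at h1
  have hseq : Tendsto (fun n : ℕ => (1/(n+1) : ℝ)) atTop (𝓝[>] 0) := by
    apply tendsto_nhdsWithin_of_tendsto_nhds_of_eventually_within
    · exact tendsto_one_div_add_atTop_nhds_zero_nat
    · exact Eventually.of_forall fun n => hposn n
  have h2 : Tendsto (fun n : ℕ => ∫ t in s n, F' t) atTop (𝓝 0) := by
    have heq : (fun n : ℕ => ∫ t in s n, F' t) = fun n : ℕ => - F (1/(n+1)) :=
      funext fun n => key _ (hposn n)
    rw [heq]
    simpa using (h0.comp hseq).neg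
  exact tendsto_nhds_unique h1 h2


/-- Theorem 1 of the paper: under the boundary condition (A1) and the integrability
condition (A2), the generalized `h`-score matching loss
`J_h(p) = ½ ∫ p₀ ∑_j h_j (∂_j log p - ∂_j log p₀)²` can be rewritten as
`∫ p₀ ∑_j [h_j' ∂_j log p + h_j ∂_jj log p + ½ h_j (∂_j log p)²] + C`,
where `C = ½ ∫ p₀ ∑_j h_j (∂_j log p₀)²` does not depend on `p`. -/
theorem stmt0 {m : ℕ} (p0 p : (Fin m → ℝ) → ℝ) (h : Fin m → ℝ → ℝ)
    (Ω : Set (Fin m → ℝ)) (hΩ : Ω = Set.univ.pi fun _ : Fin m => Ioi (0:ℝ))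
    -- twice continuously differentiable, strictly positive probability densities on Ω
    (hp0smooth : ContDiffOn ℝ 2 p0 Ω) (hpsmooth : ContDiffOn ℝ 2 p Ω)
    (hp0pos : ∀ x ∈ Ω, 0 < p0 x) (hppos : ∀ x ∈ Ω, 0 < p x)
    (hp0one : ∫ x in Ω, p0 x = 1) (hpone : ∫ x in Ω, p x = 1)
    -- h_j : (0,∞) → (0,∞) differentiable
    (hhpos : ∀ j, ∀ t ∈ Ioi (0:ℝ), 0 < h j t)
    (hhdiff : ∀ j, DifferentiableOn ℝ (h j) (Ioi 0))
    -- (A1): boundary condition, for `p` and for `p₀`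
    (hA1 : ∀ q : (Fin m → ℝ) → ℝ, q = p ∨ q = p0 → ∀ j : Fin m,
      ∀ᵐ x ∂(volume.restrict Ω),
        Tendsto (fun t : ℝ => p0 (Function.update x j t) * h j t *
            pd (fun y => Real.log (q y)) j (Function.update x j t)) atTop (𝓝 0) ∧
        Tendsto (fun t : ℝ => p0 (Function.update x j t) * h j t *
            pd (fun y => Real.log (q y)) j (Function.update x j t)) (𝓝[>] 0) (𝓝 0))
    -- (A2): integrability conditions, for `p` and for `p₀`
    (hA2sq : ∀ q : (Fin m → ℝ) → ℝ, q = p ∨ q = p0 →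
      IntegrableOn (fun x => p0 x *
        ∑ j, h j (x j) * (pd (fun y => Real.log (q y)) j x) ^ 2) Ω)
    (hA2d : ∀ q : (Fin m → ℝ) → ℝ, q = p ∨ q = p0 →
      IntegrableOn (fun x => p0 x *
        ∑ j, |pd (fun y => h j (y j) * pd (fun z => Real.log (q z)) j y) j x|) Ω) :
    (1/2) * ∫ x in Ω, p0 x * ∑ j, h j (x j) *
        (pd (fun y => Real.log (p y)) j x - pd (fun y => Real.log (p0 y)) j x) ^ 2
      = (∫ x in Ω, p0 x * ∑ j,
          (deriv (h j) (x j) * pd (fun y => Real.log (p y)) j x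
            + h j (x j) * pd2 (fun y => Real.log (p y)) j x
            + (1/2) * h j (x j) * (pd (fun y => Real.log (p y)) j x) ^ 2))
        + (1/2) * ∫ x in Ω, p0 x * ∑ j, h j (x j) *
            (pd (fun y => Real.log (p0 y)) j x) ^ 2 := by
  classical
  subst hΩ
  set f : (Fin m → ℝ) → ℝ := fun y => Real.log (p y) with hfdef
  set f0 : (Fin m → ℝ) → ℝ := fun y => Real.log (p0 y) with hf0def
  have hΩm : MeasurableSet (Set.univ.pi fun _ : Fin m => Ioi (0:ℝ)) :=
    MeasurableSet.univ_pi fun _ => measurableSet_Ioi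
  have hfC : ContDiffOn ℝ 2 f (Set.univ.pi fun _ : Fin m => Ioi (0:ℝ)) :=
    hpsmooth.log fun x hx => (hppos x hx).ne'
  have hf0C : ContDiffOn ℝ 2 f0 (Set.univ.pi fun _ : Fin m => Ioi (0:ℝ)) :=
    hp0smooth.log fun x hx => (hp0pos x hx).ne'
  -- measurability
  have mp0 : AEStronglyMeasurable p0
      (volume.restrict (Set.univ.pi fun _ : Fin m => Ioi (0:ℝ))) :=
    hp0smooth.continuousOn.aestronglyMeasurable hΩm
  have msp : ∀ j : Fin m, AEStronglyMeasurable (pd f j)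
      (volume.restrict (Set.univ.pi fun _ : Fin m => Ioi (0:ℝ))) := fun j =>
    (pd_continuousOn hfC).aestronglyMeasurable hΩm
  have ms0 : ∀ j : Fin m, AEStronglyMeasurable (pd f0 j)
      (volume.restrict (Set.univ.pi fun _ : Fin m => Ioi (0:ℝ))) := fun j =>
    (pd_continuousOn hf0C).aestronglyMeasurable hΩm
  have mh : ∀ j : Fin m, AEStronglyMeasurable (fun x : Fin m → ℝ => h j (x j))
      (volume.restrict (Set.univ.pi fun _ : Fin m => Ioi (0:ℝ))) := fun j =>
    (((hhdiff j).continuousOn).comp (continuous_apply j).continuousOn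
      fun x hx => mem_omega.mp hx j).aestronglyMeasurable hΩm
  have mdh : ∀ j : Fin m, AEStronglyMeasurable (fun x : Fin m → ℝ => deriv (h j) (x j))
      (volume.restrict (Set.univ.pi fun _ : Fin m => Ioi (0:ℝ))) := fun j =>
    ((measurable_deriv (h j)).comp (measurable_pi_apply j)).aestronglyMeasurable
  have mpd2 : ∀ j : Fin m, AEStronglyMeasurable (pd2 f j)
      (volume.restrict (Set.univ.pi fun _ : Fin m => Ioi (0:ℝ))) := fun j =>
    (pd2_continuousOn hfC).aestronglyMeasurable hΩm
  have mD : ∀ j : Fin m, AEStronglyMeasurable (fun x => pd (fun y => h j (y j) * pd f j y) j x)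
      (volume.restrict (Set.univ.pi fun _ : Fin m => Ioi (0:ℝ))) := by
    intro j
    apply AEStronglyMeasurable.congr (((mdh j).mul (msp j)).add ((mh j).mul (mpd2 j)))
    filter_upwards [ae_restrict_mem hΩm] with x hx
    exact (pd_hS_eq hfC (hhdiff j) hx).symm
  -- integrability of the individual terms
  have Ia : ∀ j : Fin m, IntegrableOn
      (fun x => p0 x * (h j (x j) * pd f j x ^ 2))
      (Set.univ.pi fun _ : Fin m => Ioi (0:ℝ)) := by
    intro j
    apply Integrable.mono (hA2sq p (Or.inl rfl))
    · exact mp0.mul ((mh j).mul (((msp j).mul (msp j)).congr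
        (Eventually.of_forall fun x => by simp [pow_two])))
    · filter_upwards [ae_restrict_mem hΩm] with x hx
      have h0 : 0 ≤ p0 x := (hp0pos x hx).le
      have h1 : ∀ k : Fin m, 0 ≤ h k (x k) * pd f k x ^ 2 := fun k =>
        mul_nonneg (hhpos k _ (mem_omega.mp hx k)).le (sq_nonneg _)
      rw [Real.norm_eq_abs, Real.norm_eq_abs, abs_of_nonneg (mul_nonneg h0 (h1 j)),
        abs_of_nonneg (mul_nonneg h0 (Finset.sum_nonneg fun k _ => h1 k))]
      exact mul_le_mul_of_nonneg_left (Finset.single_le_sum (fun k _ => h1 k)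
        (Finset.mem_univ j)) h0
  have Ic : ∀ j : Fin m, IntegrableOn
      (fun x => p0 x * (h j (x j) * pd f0 j x ^ 2))
      (Set.univ.pi fun _ : Fin m => Ioi (0:ℝ)) := by
    intro j
    apply Integrable.mono (hA2sq p0 (Or.inr rfl))
    · exact mp0.mul ((mh j).mul (((ms0 j).mul (ms0 j)).congr
        (Eventually.of_forall fun x => by simp [pow_two])))
    · filter_upwards [ae_restrict_mem hΩm] with x hx
      have h0 : 0 ≤ p0 x := (hp0pos x hx).le
      have h1 : ∀ k : Fin m, 0 ≤ h k (x k) * pd f0 k x ^ 2 := fun k =>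
        mul_nonneg (hhpos k _ (mem_omega.mp hx k)).le (sq_nonneg _)
      rw [Real.norm_eq_abs, Real.norm_eq_abs, abs_of_nonneg (mul_nonneg h0 (h1 j)),
        abs_of_nonneg (mul_nonneg h0 (Finset.sum_nonneg fun k _ => h1 k))]
      exact mul_le_mul_of_nonneg_left (Finset.single_le_sum (fun k _ => h1 k)
        (Finset.mem_univ j)) h0
  have Icr : ∀ j : Fin m, IntegrableOn
      (fun x => p0 x * (h j (x j) * (pd f j x * pd f0 j x)))
      (Set.univ.pi fun _ : Fin m => Ioi (0:ℝ)) := by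
    intro j
    apply Integrable.mono ((Ia j).add (Ic j))
    · exact mp0.mul ((mh j).mul ((msp j).mul (ms0 j)))
    · filter_upwards [ae_restrict_mem hΩm] with x hx
      have h0 : 0 ≤ p0 x := (hp0pos x hx).le
      have hh0 : 0 ≤ h j (x j) := (hhpos j _ (mem_omega.mp hx j)).le
      have habs : |pd f j x * pd f0 j x| ≤ pd f j x ^ 2 + pd f0 j x ^ 2 :=
        abs_le.mpr ⟨by nlinarith [sq_nonneg (pd f j x + pd f0 j x)],
          by nlinarith [sq_nonneg (pd f j x - pd f0 j x)]⟩
      have hrhs : 0 ≤ p0 x * (h j (x j) * pd f j x ^ 2) + p0 x * (h j (x j) * pd f0 j x ^ 2) := by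
        positivity
      simp only [Pi.add_apply]
      rw [Real.norm_eq_abs, Real.norm_eq_abs, abs_of_nonneg hrhs, abs_mul, abs_mul,
        abs_of_nonneg h0, abs_of_nonneg hh0]
      nlinarith [mul_le_mul_of_nonneg_left habs (mul_nonneg h0 hh0)]
  have Id : ∀ j : Fin m, IntegrableOn
      (fun x => p0 x * pd (fun y => h j (y j) * pd f j y) j x)
      (Set.univ.pi fun _ : Fin m => Ioi (0:ℝ)) := by
    intro j
    apply Integrable.mono (hA2d p (Or.inl rfl))
    · exact mp0.mul (mD j)
    · filter_upwards [ae_restrict_mem hΩm] with x hx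
      have h0 : 0 ≤ p0 x := (hp0pos x hx).le
      rw [Real.norm_eq_abs, Real.norm_eq_abs, abs_mul, abs_of_nonneg h0,
        abs_of_nonneg (mul_nonneg h0 (Finset.sum_nonneg fun k _ => abs_nonneg _))]
      exact mul_le_mul_of_nonneg_left (Finset.single_le_sum
        (f := fun k => |pd (fun y => h k (y k) * pd f k y) k x|)
        (fun k _ => abs_nonneg _) (Finset.mem_univ j)) h0
  -- integration by parts
  have hIBP : ∀ j : Fin m,
      ∫ x in (Set.univ.pi fun _ : Fin m => Ioi (0:ℝ)),
        p0 x * (h j (x j) * (pd f j x * pd f0 j x))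
      = - ∫ x in (Set.univ.pi fun _ : Fin m => Ioi (0:ℝ)),
          p0 x * pd (fun y => h j (y j) * pd f j y) j x := by
    intro j
    set G : (Fin m → ℝ) → ℝ := fun x => pd p0 j x * (h j (x j) * pd f j x)
      + p0 x * pd (fun y => h j (y j) * pd f j y) j x with hGdef
    have hGeq : EqOn G (fun x => p0 x * (h j (x j) * (pd f j x * pd f0 j x))
        + p0 x * pd (fun y => h j (y j) * pd f j y) j x)
        (Set.univ.pi fun _ : Fin m => Ioi (0:ℝ)) := by
      intro x hx
      have h1 : pd f0 j x = pd p0 j x / p0 x := pd_log_eq hp0smooth hp0pos hx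
      have h2 : (p0 x) ≠ 0 := (hp0pos x hx).ne'
      simp only [hGdef, h1]
      field_simp
    have hGint : IntegrableOn G (Set.univ.pi fun _ : Fin m => Ioi (0:ℝ)) := by
      apply Integrable.congr ((Icr j).add (Id j))
      filter_upwards [ae_restrict_mem hΩm] with x hx
      exact (hGeq hx).symm
    have hzero : ∫ x in (Set.univ.pi fun _ : Fin m => Ioi (0:ℝ)), G x = 0 := by
      apply slice_zero j G hGint
      filter_upwards [hA1 p (Or.inl rfl) j, ae_restrict_mem hΩm] with x hb hx
      intro hsliceint
      apply integral_deriv_zero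
        (fun t => p0 (Function.update x j t) * (h j t * pd f j (Function.update x j t)))
        (fun t => G (Function.update x j t))
      · intro t ht
        have hy : Function.update x j t ∈ (Set.univ.pi fun _ : Fin m => Ioi (0:ℝ)) :=
          update_mem_omega hx ht
        have hd := hasDerivAt_slice (j := j) hp0smooth hfC (hhdiff j) hy
        have hfun : (fun s => p0 (Function.update (Function.update x j t) j s) *
            (h j s * pd f j (Function.update (Function.update x j t) j s)))
            = fun s => p0 (Function.update x j s) *
                (h j s * pd f j (Function.update x j s)) := by
          funext s; rw [Function.update_idem]
        rw [hfun] at hd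
        simp only [Function.update_self] at hd
        have hval : G (Function.update x j t) = pd p0 j (Function.update x j t) *
            (h j t * pd f j (Function.update x j t))
            + p0 (Function.update x j t) * (deriv (h j) t * pd f j (Function.update x j t)
              + h j t * pd2 f j (Function.update x j t)) := by
          simp only [hGdef]
          rw [pd_hS_eq hfC (hhdiff j) hy, Function.update_self]
        rw [hval]
        exact hd
      · exact hsliceint
      · exact Filter.Tendsto.congr (fun t => mul_assoc _ _ _) hb.1
      · exact Filter.Tendsto.congr (fun t => mul_assoc _ _ _) hb.2
    have h4 : ∫ x in (Set.univ.pi fun _ : Fin m => Ioi (0:ℝ)), G x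
        = (∫ x in (Set.univ.pi fun _ : Fin m => Ioi (0:ℝ)),
            p0 x * (h j (x j) * (pd f j x * pd f0 j x)))
          + ∫ x in (Set.univ.pi fun _ : Fin m => Ioi (0:ℝ)),
            p0 x * pd (fun y => h j (y j) * pd f j y) j x := by
      rw [setIntegral_congr_fun hΩm hGeq]
      exact integral_add (Icr j) (Id j)
    rw [h4] at hzero
    linarith
  -- rewrite the three integrals
  have hLfun : (fun x => p0 x * ∑ j, h j (x j) * (pd f j x - pd f0 j x) ^ 2)
      = fun x => ∑ j : Fin m, (p0 x * (h j (x j) * pd f j x ^ 2)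
          - 2 * (p0 x * (h j (x j) * (pd f j x * pd f0 j x)))
          + p0 x * (h j (x j) * pd f0 j x ^ 2)) := by
    funext x
    rw [Finset.mul_sum]
    exact Finset.sum_congr rfl fun j _ => by ring
  have hCfun : (fun x => p0 x * ∑ j, h j (x j) * pd f0 j x ^ 2)
      = fun x => ∑ j : Fin m, p0 x * (h j (x j) * pd f0 j x ^ 2) := by
    funext x
    rw [Finset.mul_sum]
  have hRfun : EqOn (fun x => p0 x * ∑ j, (deriv (h j) (x j) * pd f j x
        + h j (x j) * pd2 f j x + 1/2 * h j (x j) * pd f j x ^ 2))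
      (fun x => ∑ j : Fin m, (p0 x * pd (fun y => h j (y j) * pd f j y) j x
        + 1/2 * (p0 x * (h j (x j) * pd f j x ^ 2))))
      (Set.univ.pi fun _ : Fin m => Ioi (0:ℝ)) := by
    intro x hx
    dsimp only
    rw [Finset.mul_sum]
    refine Finset.sum_congr rfl fun j _ => ?_
    rw [pd_hS_eq hfC (hhdiff j) hx]
    ring
  rw [hLfun, hCfun, setIntegral_congr_fun hΩm hRfun]
  rw [integral_finset_sum (μ := volume.restrict (Set.univ.pi fun _ : Fin m => Ioi (0:ℝ)))
      (f := fun j x => p0 x * (h j (x j) * pd f j x ^ 2)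
        - 2 * (p0 x * (h j (x j) * (pd f j x * pd f0 j x)))
        + p0 x * (h j (x j) * pd f0 j x ^ 2)) Finset.univ
      (fun j _ => by exact (((Ia j).sub ((Icr j).const_mul 2)).add (Ic j))),
    integral_finset_sum (μ := volume.restrict (Set.univ.pi fun _ : Fin m => Ioi (0:ℝ)))
      (f := fun j x => p0 x * pd (fun y => h j (y j) * pd f j y) j x
        + 1/2 * (p0 x * (h j (x j) * pd f j x ^ 2))) Finset.univ
      (fun j _ => by exact ((Id j).add ((Ia j).const_mul (1/2)))),
    integral_finset_sum (μ := volume.restrict (Set.univ.pi fun _ : Fin m => Ioi (0:ℝ)))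
      (f := fun j x => p0 x * (h j (x j) * pd f0 j x ^ 2)) Finset.univ
      (fun j _ => (Ic j))]
  have hsplitL : ∀ j : Fin m,
      ∫ x in (Set.univ.pi fun _ : Fin m => Ioi (0:ℝ)),
        (p0 x * (h j (x j) * pd f j x ^ 2)
          - 2 * (p0 x * (h j (x j) * (pd f j x * pd f0 j x)))
          + p0 x * (h j (x j) * pd f0 j x ^ 2))
      = (∫ x in (Set.univ.pi fun _ : Fin m => Ioi (0:ℝ)), p0 x * (h j (x j) * pd f j x ^ 2))
        - 2 * (∫ x in (Set.univ.pi fun _ : Fin m => Ioi (0:ℝ)),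
            p0 x * (h j (x j) * (pd f j x * pd f0 j x)))
        + ∫ x in (Set.univ.pi fun _ : Fin m => Ioi (0:ℝ)),
            p0 x * (h j (x j) * pd f0 j x ^ 2) := by
    intro j
    rw [integral_add (f := fun x => p0 x * (h j (x j) * pd f j x ^ 2)
        - 2 * (p0 x * (h j (x j) * (pd f j x * pd f0 j x))))
        (g := fun x => p0 x * (h j (x j) * pd f0 j x ^ 2))
        (by exact (Ia j).sub ((Icr j).const_mul 2)) (Ic j),
      integral_sub (f := fun x => p0 x * (h j (x j) * pd f j x ^ 2))
        (g := fun x => 2 * (p0 x * (h j (x j) * (pd f j x * pd f0 j x))))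
        (Ia j) (by exact (Icr j).const_mul 2), integral_const_mul]
  have hsplitR : ∀ j : Fin m,
      ∫ x in (Set.univ.pi fun _ : Fin m => Ioi (0:ℝ)),
        (p0 x * pd (fun y => h j (y j) * pd f j y) j x
          + 1/2 * (p0 x * (h j (x j) * pd f j x ^ 2)))
      = (∫ x in (Set.univ.pi fun _ : Fin m => Ioi (0:ℝ)),
            p0 x * pd (fun y => h j (y j) * pd f j y) j x)
        + 1/2 * ∫ x in (Set.univ.pi fun _ : Fin m => Ioi (0:ℝ)),
            p0 x * (h j (x j) * pd f j x ^ 2) := by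
    intro j
    rw [integral_add (f := fun x => p0 x * pd (fun y => h j (y j) * pd f j y) j x)
        (g := fun x => 1/2 * (p0 x * (h j (x j) * pd f j x ^ 2)))
        (Id j) (by exact (Ia j).const_mul (1/2)), integral_const_mul]
  simp only [hsplitL, hsplitR]
  rw [Finset.mul_sum, Finset.mul_sum, ← Finset.sum_add_distrib]
  refine Finset.sum_congr rfl fun j _ => ?_
  rw [hIBP j]
  ring
end

section
/- Consider an exponential family on $\mathbb{R}_+^m$ with densities $\log p_\theta(x)=\theta^\top t(x)-\psi(\theta)+b(x)$ for $\theta\in\mathbb{R}^r$, where $t:(0,\infty)^m\to\mathbb{R}^r$ and $b:(0,\infty)^m\to\mathbb{R}$ are twice differentiable. Given data points $X^{(1)},\dots,X^{(n)}\in(0,\infty)^m$ and differentiable $h_1,\dots,h_m:(0,\infty)\to[0,\infty)$, the empirical generalized $h$-score matching loss satisfies, for all $\theta\in\mathbb{R}^r$, $\hat J_h(p_\theta)=\tfrac12\theta^\top\Gamma\theta-g^\top\theta+c$, where $\Gamma=\frac1n\sum_{i=1}^n\sum_{j=1}^m h_j(X_j^{(i)})\,\partial_j t(X^{(i)})\,\partial_j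 t(X^{(i)})^\top$, $g=-\frac1n\sum_{i=1}^n\sum_{j=1}^m\big[h_j'(X_j^{(i)})\partial_j t(X^{(i)})+h_j(X_j^{(i)})\partial_{jj}t(X^{(i)})+h_j(X_j^{(i)})\partial_j b(X^{(i)})\,\partial_j t(X^{(i)})\big]$, and $c=\frac1n\sum_{i=1}^n\sum_{j=1}^m\big[h_j'(X_j^{(i)})\partial_j b(X^{(i)})+h_j(X_j^{(i)})\partial_{jj}b(X^{(i)})+\tfrac12 h_j(X_j^{(i)})(\partial_j b(X^{(i)}))^2\big]$ does not depend on $\theta$. -/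
open MeasureTheory Filter Topology Set

private lemma update_contDiff {m : ℕ} (x : Fin m → ℝ) (j : Fin m) :
    ContDiff ℝ 2 (fun s : ℝ => Function.update x j s) := by
  rw [contDiff_pi]
  intro i
  by_cases hij : i = j
  · subst hij
    simpa [Function.update_apply] using (contDiff_fun_id : ContDiff ℝ 2 (fun s : ℝ => s))
  · simpa [Function.update_apply, hij] using (contDiff_const : ContDiff ℝ 2 fun _ : ℝ => x i)

private lemma sum_swap4 {r n m : ℕ} (F : Fin r → Fin r → Fin n → Fin m → ℝ) :
    ∑ k, ∑ l, ∑ i, ∑ j, F k l i j = ∑ i, ∑ j, ∑ k, ∑ l, F k l i j :=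
  calc ∑ k, ∑ l, ∑ i, ∑ j, F k l i j
      = ∑ k, ∑ i, ∑ l, ∑ j, F k l i j :=
        Finset.sum_congr rfl fun k _ => Finset.sum_comm
    _ = ∑ i, ∑ k, ∑ l, ∑ j, F k l i j := Finset.sum_comm
    _ = ∑ i, ∑ k, ∑ j, ∑ l, F k l i j :=
        Finset.sum_congr rfl fun i _ => Finset.sum_congr rfl fun k _ => Finset.sum_comm
    _ = ∑ i, ∑ j, ∑ k, ∑ l, F k l i j :=
        Finset.sum_congr rfl fun i _ => Finset.sum_comm

private lemma sum_swap3 {r n m : ℕ} (F : Fin r → Fin n → Fin m → ℝ) :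
    ∑ k, ∑ i, ∑ j, F k i j = ∑ i, ∑ j, ∑ k, F k i j :=
  calc ∑ k, ∑ i, ∑ j, F k i j
      = ∑ i, ∑ k, ∑ j, F k i j := Finset.sum_comm
    _ = ∑ i, ∑ j, ∑ k, F k i j :=
        Finset.sum_congr rfl fun i _ => Finset.sum_comm

private lemma pull_sum4 {r n m : ℕ} (c : ℝ) (C : Fin r → Fin r → Fin n → Fin m → ℝ)
    (θ : Fin r → ℝ) :
    ∑ k, ∑ l, θ k * (c * ∑ i, ∑ j, C k l i j) * θ l
      = c * ∑ i, ∑ j, ∑ k, ∑ l, θ k * C k l i j * θ l := by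
  calc ∑ k, ∑ l, θ k * (c * ∑ i, ∑ j, C k l i j) * θ l
      = ∑ k, ∑ l, ∑ i, ∑ j, c * (θ k * C k l i j * θ l) := by
        refine Finset.sum_congr rfl fun k _ => Finset.sum_congr rfl fun l _ => ?_
        simp only [Finset.mul_sum, Finset.sum_mul]
        exact Finset.sum_congr rfl fun i _ => Finset.sum_congr rfl fun j _ => by ring
    _ = ∑ i, ∑ j, ∑ k, ∑ l, c * (θ k * C k l i j * θ l) := sum_swap4 _
    _ = c * ∑ i, ∑ j, ∑ k, ∑ l, θ k * C k l i j * θ l := by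
        simp only [Finset.mul_sum]

private lemma pull_sum3 {r n m : ℕ} (c : ℝ) (D : Fin r → Fin n → Fin m → ℝ)
    (θ : Fin r → ℝ) :
    ∑ k, (-(c * ∑ i, ∑ j, D k i j)) * θ k
      = c * ∑ i, ∑ j, ∑ k, (-(D k i j)) * θ k := by
  calc ∑ k, (-(c * ∑ i, ∑ j, D k i j)) * θ k
      = ∑ k, ∑ i, ∑ j, c * ((-(D k i j)) * θ k) := by
        refine Finset.sum_congr rfl fun k _ => ?_
        calc (-(c * ∑ i, ∑ j, D k i j)) * θ k
            = c * ((∑ i, ∑ j, D k i j) * (-θ k)) := by ring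
          _ = c * (∑ i, ∑ j, D k i j * (-θ k)) := by simp only [Finset.sum_mul]
          _ = ∑ i, ∑ j, c * (D k i j * (-θ k)) := by simp only [Finset.mul_sum]
          _ = ∑ i, ∑ j, c * ((-(D k i j)) * θ k) := by
              exact Finset.sum_congr rfl fun i _ => Finset.sum_congr rfl fun j _ => by ring
    _ = ∑ i, ∑ j, ∑ k, c * ((-(D k i j)) * θ k) := sum_swap3 _
    _ = c * ∑ i, ∑ j, ∑ k, (-(D k i j)) * θ k := by
        simp only [Finset.mul_sum]

private lemma pd_pd2_comb {m r : ℕ} (t : (Fin m → ℝ) → Fin r → ℝ) (b : (Fin m → ℝ) → ℝ)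
    (c : ℝ) (θ : Fin r → ℝ) (x : Fin m → ℝ)
    (ht : ∀ k, ContDiffOn ℝ 2 (fun x => t x k) (Set.univ.pi fun _ : Fin m => Ioi (0:ℝ)))
    (hb : ContDiffOn ℝ 2 b (Set.univ.pi fun _ : Fin m => Ioi (0:ℝ)))
    (hx : x ∈ Set.univ.pi fun _ : Fin m => Ioi (0:ℝ)) (j : Fin m) :
    pd (fun x => (∑ k, θ k * t x k) - c + b x) j x
        = (∑ k, θ k * pd (fun x => t x k) j x) + pd b j x
    ∧ pd2 (fun x => (∑ k, θ k * t x k) - c + b x) j x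
        = (∑ k, θ k * pd2 (fun x => t x k) j x) + pd2 b j x := by
  have hxj : x j ∈ Ioi (0:ℝ) := hx j (Set.mem_univ j)
  have hmaps : Set.MapsTo (fun s : ℝ => Function.update x j s) (Ioi 0)
      (Set.univ.pi fun _ : Fin m => Ioi (0:ℝ)) := by
    intro s hs i _
    rcases eq_or_ne i j with hij | hij
    · subst hij; simpa [Function.update_apply] using hs
    · simpa [Function.update_apply, hij] using hx i (Set.mem_univ i)
  have hgc : ∀ k, ContDiffOn ℝ 2 (fun s : ℝ => t (Function.update x j s) k) (Ioi 0) :=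
    fun k => (ht k).comp (update_contDiff x j).contDiffOn hmaps
  have hgbc : ContDiffOn ℝ 2 (fun s : ℝ => b (Function.update x j s)) (Ioi 0) :=
    hb.comp (update_contDiff x j).contDiffOn hmaps
  have hdg : ∀ k, ∀ s ∈ Ioi (0:ℝ),
      DifferentiableAt ℝ (fun s : ℝ => t (Function.update x j s) k) s := fun k s hs =>
    ((hgc k).differentiableOn (by norm_num)).differentiableAt (isOpen_Ioi.mem_nhds hs)
  have hdgb : ∀ s ∈ Ioi (0:ℝ),
      DifferentiableAt ℝ (fun s : ℝ => b (Function.update x j s)) s := fun s hs =>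
    (hgbc.differentiableOn (by norm_num)).differentiableAt (isOpen_Ioi.mem_nhds hs)
  have hdg' : ∀ k, ∀ s ∈ Ioi (0:ℝ),
      DifferentiableAt ℝ (deriv (fun s : ℝ => t (Function.update x j s) k)) s := fun k s hs =>
    (((hgc k).deriv_of_isOpen (m := 1) isOpen_Ioi (by norm_num)).differentiableOn
      (by norm_num)).differentiableAt (isOpen_Ioi.mem_nhds hs)
  have hdgb' : ∀ s ∈ Ioi (0:ℝ),
      DifferentiableAt ℝ (deriv (fun s : ℝ => b (Function.update x j s))) s := fun s hs =>
    ((hgbc.deriv_of_isOpen (m := 1) isOpen_Ioi (by norm_num)).differentiableOn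
      (by norm_num)).differentiableAt (isOpen_Ioi.mem_nhds hs)
  have key : ∀ s ∈ Ioi (0:ℝ),
      deriv (fun u : ℝ =>
        (∑ k, θ k * t (Function.update x j u) k) - c + b (Function.update x j u)) s
      = (∑ k, θ k * deriv (fun u : ℝ => t (Function.update x j u) k) s)
        + deriv (fun u : ℝ => b (Function.update x j u)) s := by
    intro s hs
    have Hsum : HasDerivAt (fun u : ℝ => ∑ k, θ k * t (Function.update x j u) k)
        (∑ k, θ k * deriv (fun u : ℝ => t (Function.update x j u) k) s) s :=
      HasDerivAt.fun_sum fun k _ => ((hdg k s hs).hasDerivAt).const_mul (θ k)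
    exact ((Hsum.sub_const c).add (hdgb s hs).hasDerivAt).deriv
  constructor
  · exact key (x j) hxj
  · have hEq : deriv (fun u : ℝ =>
        (∑ k, θ k * t (Function.update x j u) k) - c + b (Function.update x j u))
        =ᶠ[𝓝 (x j)] (fun s =>
          (∑ k, θ k * deriv (fun u : ℝ => t (Function.update x j u) k) s)
            + deriv (fun u : ℝ => b (Function.update x j u)) s) := by
      filter_upwards [isOpen_Ioi.mem_nhds hxj] with s hs using key s hs
    have h1 : pd2 (fun x => (∑ k, θ k * t x k) - c + b x) j x
        = deriv (fun s =>
          (∑ k, θ k * deriv (fun u : ℝ => t (Function.update x j u) k) s)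
            + deriv (fun u : ℝ => b (Function.update x j u)) s) (x j) := hEq.deriv_eq
    rw [h1]
    have Hsum : HasDerivAt (fun s : ℝ =>
        ∑ k, θ k * deriv (fun u : ℝ => t (Function.update x j u) k) s)
        (∑ k, θ k * deriv (deriv (fun u : ℝ => t (Function.update x j u) k)) (x j)) (x j) :=
      HasDerivAt.fun_sum fun k _ => ((hdg' k (x j) hxj).hasDerivAt).const_mul (θ k)
    exact (Hsum.add (hdgb' (x j) hxj).hasDerivAt).deriv

/-- For an exponential family `log p_θ(x) = θᵀ t(x) - ψ(θ) + b(x)` on `(0,∞)^m`, the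
empirical generalized `h`-score matching loss is the quadratic function
`θ ↦ ½ θᵀ Γ θ - gᵀ θ + c` of the canonical parameter `θ`, with `Γ`, `g`, `c` as below. -/
theorem stmt3 {m r n : ℕ} (t : (Fin m → ℝ) → Fin r → ℝ) (b : (Fin m → ℝ) → ℝ)
    (ψ : (Fin r → ℝ) → ℝ) (h : Fin m → ℝ → ℝ) (X : Fin n → Fin m → ℝ)
    (Ω : Set (Fin m → ℝ)) (hΩ : Ω = Set.univ.pi fun _ : Fin m => Ioi (0:ℝ))
    (ht : ∀ k, ContDiffOn ℝ 2 (fun x => t x k) Ω) (hb : ContDiffOn ℝ 2 b Ω)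
    (hhdiff : ∀ j, DifferentiableOn ℝ (h j) (Ioi 0))
    (hhnonneg : ∀ j, ∀ s ∈ Ioi (0:ℝ), 0 ≤ h j s)
    (hX : ∀ i, X i ∈ Ω) :
    ∀ θ : Fin r → ℝ,
      -- the empirical generalized h-score matching loss of `log p_θ = θᵀt - ψ(θ) + b`
      (1/(n:ℝ)) * ∑ i, ∑ j,
          (deriv (h j) (X i j)
              * pd (fun x => (∑ k, θ k * t x k) - ψ θ + b x) j (X i)
            + h j (X i j) *
              (pd2 (fun x => (∑ k, θ k * t x k) - ψ θ + b x) j (X i)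
                + (1/2) * (pd (fun x => (∑ k, θ k * t x k) - ψ θ + b x) j (X i)) ^ 2))
      = (1/2) * (∑ k, ∑ l, θ k *
            ((1/(n:ℝ)) * ∑ i, ∑ j, h j (X i j)
              * pd (fun x => t x k) j (X i) * pd (fun x => t x l) j (X i)) * θ l)
        - (∑ k, (-((1/(n:ℝ)) * ∑ i, ∑ j,
            (deriv (h j) (X i j) * pd (fun x => t x k) j (X i)
              + h j (X i j) * pd2 (fun x => t x k) j (X i)
              + h j (X i j) * pd b j (X i) * pd (fun x => t x k) j (X i)))) * θ k)
        + (1/(n:ℝ)) * ∑ i, ∑ j,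
            (deriv (h j) (X i j) * pd b j (X i)
              + h j (X i j) * pd2 b j (X i)
              + (1/2) * h j (X i j) * (pd b j (X i)) ^ 2) := by
  subst hΩ
  intro θ
  have hcomb := fun (i : Fin n) (j : Fin m) =>
    pd_pd2_comb t b (ψ θ) θ (X i) ht hb (hX i) j
  have hL : ∑ i, ∑ j,
          (deriv (h j) (X i j)
              * pd (fun x => (∑ k, θ k * t x k) - ψ θ + b x) j (X i)
            + h j (X i j) *
              (pd2 (fun x => (∑ k, θ k * t x k) - ψ θ + b x) j (X i)
                + (1/2) * (pd (fun x => (∑ k, θ k * t x k) - ψ θ + b x) j (X i)) ^ 2))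
      = ∑ i, ∑ j,
          (deriv (h j) (X i j)
              * ((∑ k, θ k * pd (fun x => t x k) j (X i)) + pd b j (X i))
            + h j (X i j) *
              (((∑ k, θ k * pd2 (fun x => t x k) j (X i)) + pd2 b j (X i))
                + (1/2) * ((∑ k, θ k * pd (fun x => t x k) j (X i)) + pd b j (X i)) ^ 2)) := by
    refine Finset.sum_congr rfl fun i _ => Finset.sum_congr rfl fun j _ => ?_
    rw [(hcomb i j).1, (hcomb i j).2]
  rw [hL]
  have e1 : (∑ k, ∑ l, θ k *
        ((1/(n:ℝ)) * ∑ i, ∑ j, h j (X i j)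
          * pd (fun x => t x k) j (X i) * pd (fun x => t x l) j (X i)) * θ l)
      = (1/(n:ℝ)) * ∑ i, ∑ j, ∑ k, ∑ l,
          θ k * (h j (X i j)
            * pd (fun x => t x k) j (X i) * pd (fun x => t x l) j (X i)) * θ l :=
    pull_sum4 (1/(n:ℝ))
      (fun k l i j => h j (X i j) * pd (fun x => t x k) j (X i) * pd (fun x => t x l) j (X i)) θ
  have e2 : (∑ k, (-((1/(n:ℝ)) * ∑ i, ∑ j,
        (deriv (h j) (X i j) * pd (fun x => t x k) j (X i)
          + h j (X i j) * pd2 (fun x => t x k) j (X i)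
          + h j (X i j) * pd b j (X i) * pd (fun x => t x k) j (X i)))) * θ k)
      = (1/(n:ℝ)) * ∑ i, ∑ j, ∑ k,
          (-(deriv (h j) (X i j) * pd (fun x => t x k) j (X i)
            + h j (X i j) * pd2 (fun x => t x k) j (X i)
            + h j (X i j) * pd b j (X i) * pd (fun x => t x k) j (X i))) * θ k :=
    pull_sum3 (1/(n:ℝ))
      (fun k i j => deriv (h j) (X i j) * pd (fun x => t x k) j (X i)
        + h j (X i j) * pd2 (fun x => t x k) j (X i)
        + h j (X i j) * pd b j (X i) * pd (fun x => t x k) j (X i)) θ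
  rw [e1, e2]
  set A : Fin n → Fin m → ℝ := fun i j => ∑ k, ∑ l,
      θ k * (h j (X i j)
        * pd (fun x => t x k) j (X i) * pd (fun x => t x l) j (X i)) * θ l with hA
  set B : Fin n → Fin m → ℝ := fun i j => ∑ k,
      (-(deriv (h j) (X i j) * pd (fun x => t x k) j (X i)
        + h j (X i j) * pd2 (fun x => t x k) j (X i)
        + h j (X i j) * pd b j (X i) * pd (fun x => t x k) j (X i))) * θ k with hB
  set C : Fin n → Fin m → ℝ := fun i j =>
      deriv (h j) (X i j) * pd b j (X i)
        + h j (X i j) * pd2 b j (X i)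
        + (1/2) * h j (X i j) * (pd b j (X i)) ^ 2 with hC
  have hLL : ∑ i, ∑ j,
          (deriv (h j) (X i j)
              * ((∑ k, θ k * pd (fun x => t x k) j (X i)) + pd b j (X i))
            + h j (X i j) *
              (((∑ k, θ k * pd2 (fun x => t x k) j (X i)) + pd2 b j (X i))
                + (1/2) * ((∑ k, θ k * pd (fun x => t x k) j (X i)) + pd b j (X i)) ^ 2))
      = ∑ i, ∑ j, ((1/2) * A i j - B i j + C i j) := by
    refine Finset.sum_congr rfl fun i _ => Finset.sum_congr rfl fun j _ => ?_
    have q1 : A i j = h j (X i j) * (∑ k, θ k * pd (fun x => t x k) j (X i)) ^ 2 := by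
      rw [hA, sq, Finset.sum_mul_sum, Finset.mul_sum]
      refine Finset.sum_congr rfl fun k _ => ?_
      rw [Finset.mul_sum]
      exact Finset.sum_congr rfl fun l _ => by ring
    have q2 : B i j = -(deriv (h j) (X i j) * (∑ k, θ k * pd (fun x => t x k) j (X i))
        + h j (X i j) * (∑ k, θ k * pd2 (fun x => t x k) j (X i))
        + h j (X i j) * pd b j (X i) * (∑ k, θ k * pd (fun x => t x k) j (X i))) := by
      rw [hB]
      calc ∑ k, (-(deriv (h j) (X i j) * pd (fun x => t x k) j (X i)
            + h j (X i j) * pd2 (fun x => t x k) j (X i)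
            + h j (X i j) * pd b j (X i) * pd (fun x => t x k) j (X i))) * θ k
          = ∑ k, (-(deriv (h j) (X i j) * (θ k * pd (fun x => t x k) j (X i))
            + h j (X i j) * (θ k * pd2 (fun x => t x k) j (X i))
            + h j (X i j) * pd b j (X i) * (θ k * pd (fun x => t x k) j (X i)))) :=
            Finset.sum_congr rfl fun k _ => by ring
        _ = -(deriv (h j) (X i j) * (∑ k, θ k * pd (fun x => t x k) j (X i))
            + h j (X i j) * (∑ k, θ k * pd2 (fun x => t x k) j (X i))
            + h j (X i j) * pd b j (X i) * (∑ k, θ k * pd (fun x => t x k) j (X i))) := by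
            simp only [Finset.mul_sum, Finset.sum_add_distrib, Finset.sum_neg_distrib,
              neg_add_rev]
    rw [q1, q2, hC]
    ring
  rw [hLL]
  have split : ∑ i, ∑ j, ((1/2) * A i j - B i j + C i j)
      = (1/2) * (∑ i, ∑ j, A i j) - (∑ i, ∑ j, B i j) + ∑ i, ∑ j, C i j := by
    simp only [Finset.sum_add_distrib, Finset.sum_sub_distrib, Finset.mul_sum]
  rw [split]
  ring
end

section
/- Fix $\mu\in\mathbb{R}$ and consider the univariate truncated Gaussian family $p_{\sigma^2}(x)\propto\exp(-(x-\mu)^2/(2\sigma^2))$ on $(0,\infty)$ with unknown variance parameter $\sigma^2>0$, parameterized by the canonical parameter $\theta=1/\sigma^2\in(0,\infty)$. Let $h:(0,\infty)\to[0,\infty)$ be differentiable and let $X_1,\dots,X_n\in(0,\infty)$ satisfy $\sum_{i=1}^n h(X_i)(X_i-\mu)^2>0$ and $\sum_{i=1}^n\big(h(X_i)+h'(X_i)(X_i-\mu)\big)>0$. Then the empirical generalized $h$-score matching loss, as a function of $\theta$, equals $\frac1n\sum_{i=1}^n\big[-h'(X_i)(X_i-\mu)\theta-h(X_i)\theta+\tfrac12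 h(X_i)(X_i-\mu)^2\theta^2\big]$ and has unique minimizer over $(0,\infty)$ at $\hat\theta=\frac{\sum_{i=1}^n(h(X_i)+h'(X_i)(X_i-\mu))}{\sum_{i=1}^n h(X_i)(X_i-\mu)^2}$; equivalently $\hat\sigma^2_h=1/\hat\theta=\frac{\sum_{i=1}^n h(X_i)(X_i-\mu)^2}{\sum_{i=1}^n\big(h(X_i)+h'(X_i)(X_i-\mu)\big)}$. -/
open MeasureTheory Set

lemma deriv1 (μ θ c : ℝ) :
    deriv (fun x : ℝ => -θ * (x - μ)^2 / 2 - c) = fun x => -θ * (x - μ) := by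
  funext x
  have h1 : HasDerivAt (fun x : ℝ => -θ * (x - μ)^2 / 2 - c) (-θ * (x - μ)) x := by
    have hb : HasDerivAt (fun x : ℝ => x - μ) 1 x := (hasDerivAt_id x).sub_const μ
    have h2 := ((hb.pow 2).const_mul (-θ)).div_const 2
    have h3 := h2.sub_const c
    rw [show -θ * (x - μ) = -θ * (((2:ℕ):ℝ) * (x - μ) ^ (2 - 1) * 1) / 2 by push_cast; ring]; exact h3
  exact h1.deriv

lemma deriv2 (μ θ c : ℝ) (x : ℝ) :
    deriv (deriv (fun x : ℝ => -θ * (x - μ)^2 / 2 - c)) x = -θ := by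
  rw [deriv1]
  have h1 : HasDerivAt (fun x : ℝ => -θ * (x - μ)) (-θ) x := by
    have hb : HasDerivAt (fun x : ℝ => x - μ) 1 x := (hasDerivAt_id x).sub_const μ
    have := hb.const_mul (-θ)
    simpa using this
  exact h1.deriv

/-- For the univariate truncated Gaussian family with known mean `μ` and canonical
parameter `θ = 1/σ² ∈ (0,∞)`, i.e. `p_θ(x) = Z(θ)⁻¹ exp(-θ(x-μ)²/2)` on `(0,∞)`, the
empirical generalized `h`-score matching loss equals the claimed quadratic in `θ`, with
unique minimizer over `(0,∞)` at
`θ̂ = ∑ᵢ(h(Xᵢ) + h'(Xᵢ)(Xᵢ-μ)) / ∑ᵢ h(Xᵢ)(Xᵢ-μ)²`; equivalently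
`σ̂²_h = 1/θ̂ = ∑ᵢ h(Xᵢ)(Xᵢ-μ)² / ∑ᵢ(h(Xᵢ) + h'(Xᵢ)(Xᵢ-μ))`. -/
theorem stmt10 (μ : ℝ) {n : ℕ} (X : Fin n → ℝ) (hX : ∀ i, 0 < X i)
    (h : ℝ → ℝ) (hhdiff : DifferentiableOn ℝ h (Ioi 0))
    (hhnonneg : ∀ x ∈ Ioi (0:ℝ), 0 ≤ h x)
    (hpos1 : 0 < ∑ i, h (X i) * (X i - μ)^2)
    (hpos2 : 0 < ∑ i, (h (X i) + deriv h (X i) * (X i - μ)))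
    -- normalizing constant as a function of the canonical parameter θ
    (Z : ℝ → ℝ) (hZ : ∀ θ, Z θ = ∫ x in Ioi (0:ℝ), Real.exp (-θ * (x - μ)^2 / 2))
    -- the empirical generalized h-score matching loss of p_θ
    (J : ℝ → ℝ)
    (hJ : ∀ θ, J θ = (1/(n:ℝ)) * ∑ i,
      (deriv h (X i) * deriv (fun x => -θ * (x - μ)^2 / 2 - Real.log (Z θ)) (X i)
        + h (X i) *
          (deriv (deriv (fun x => -θ * (x - μ)^2 / 2 - Real.log (Z θ))) (X i)
            + (1/2) *
              (deriv (fun x => -θ * (x - μ)^2 / 2 - Real.log (Z θ)) (X i)) ^ 2)))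
    (θhat : ℝ)
    (hθhat : θhat = (∑ i, (h (X i) + deriv h (X i) * (X i - μ)))
        / ∑ i, h (X i) * (X i - μ)^2) :
    (∀ θ, J θ = (1/(n:ℝ)) * ∑ i,
        (-(deriv h (X i) * (X i - μ) * θ) - h (X i) * θ
          + (1/2) * h (X i) * (X i - μ)^2 * θ^2))
    ∧ 0 < θhat
    ∧ (∀ θ ∈ Ioi (0:ℝ), θ ≠ θhat → J θhat < J θ)
    ∧ 1 / θhat = (∑ i, h (X i) * (X i - μ)^2)
        / ∑ i, (h (X i) + deriv h (X i) * (X i - μ)) := by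
  have hn : (n:ℝ) ≠ 0 := by
    rintro hn0
    have : n = 0 := Nat.cast_eq_zero.mp hn0
    subst this; simp at hpos1
  have hnpos : 0 < (1/(n:ℝ)) := by positivity
  set S2 := ∑ i, h (X i) * (X i - μ)^2 with hS2
  set S1 := ∑ i, (h (X i) + deriv h (X i) * (X i - μ)) with hS1
  have part1 : ∀ θ, J θ = (1/(n:ℝ)) * ∑ i,
      (-(deriv h (X i) * (X i - μ) * θ) - h (X i) * θ
        + (1/2) * h (X i) * (X i - μ)^2 * θ^2) := by
    intro θ
    rw [hJ θ]
    congr 1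
    apply Finset.sum_congr rfl
    intro i _
    rw [deriv2, deriv1]
    simp only []
    ring
  have key : ∀ θ, J θ = (1/(n:ℝ)) * (θ^2/2 * S2 - θ * S1) := by
    intro θ
    rw [part1 θ]
    congr 1
    rw [hS2, hS1, Finset.mul_sum, Finset.mul_sum, ← Finset.sum_sub_distrib]
    apply Finset.sum_congr rfl
    intro i _
    ring
  have hθpos : 0 < θhat := by rw [hθhat]; exact div_pos hpos2 hpos1
  refine ⟨part1, hθpos, ?_, ?_⟩
  · intro θ _ hne
    rw [key θ, key θhat]
    apply mul_lt_mul_of_pos_left _ hnpos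
    have hS : θhat * S2 = S1 := by
      rw [hθhat]; field_simp
    have h0 : 0 < (θ - θhat)^2 := by
      have := sub_ne_zero.mpr hne
      positivity
    nlinarith [mul_pos hpos1 h0]
  · rw [hθhat, one_div_div]
end

section
/- Let $p_0$ and $p$ be continuously differentiable, strictly positive probability densities on $(0,\infty)^m$. Define the log-transformed densities on $\mathbb{R}^m$ by $q_0(y)=p_0(e^{y_1},\dots,e^{y_m})\exp(\sum_{j=1}^m y_j)$ and $q(y)=p(e^{y_1},\dots,e^{y_m})\exp(\sum_{j=1}^m y_j)$ (the densities of $(\log X_1,\dots,\log X_m)$ under $p_0$ and $p$). Then the (original) score matching loss of $q$ relative to $q_0$ over $\mathbb{R}^m$ equals the non-negative score matching loss of $p$ relative to $p_0$: $\int_{\mathbb{R}^m}q_0(y)\,\|\nabla\log q(y)-\nabla\log q_0(y)\|_2^2\,dy=\int_{(0,\infty)^m}p_0(x)\,\sum_{j=1}^m x_j^2\,(\partial_j\log p(x)-\partial_j\log p_0(x))^2\,dx$, where either side may be $+\infty$. -/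
open MeasureTheory Filter Topology Set

/-- The derivative of the coordinatewise exponential map. -/
noncomputable def expD {m : ℕ} (y : Fin m → ℝ) : (Fin m → ℝ) →L[ℝ] (Fin m → ℝ) :=
  ContinuousLinearMap.pi fun j => Real.exp (y j) • ContinuousLinearMap.proj j

lemma expD_hasFDerivAt {m : ℕ} (y : Fin m → ℝ) :
    HasFDerivAt (fun z : Fin m → ℝ => fun j => Real.exp (z j)) (expD y) y := by
  rw [expD, hasFDerivAt_pi]
  intro j
  exact (Real.hasDerivAt_exp (y j)).comp_hasFDerivAt y (hasFDerivAt_apply (𝕜 := ℝ) j y)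

lemma expD_det {m : ℕ} (y : Fin m → ℝ) :
    (expD y).det = Real.exp (∑ j, y j) := by
  have h : LinearMap.toMatrix (Pi.basisFun ℝ (Fin m)) (Pi.basisFun ℝ (Fin m))
      ((expD y : (Fin m → ℝ) →ₗ[ℝ] (Fin m → ℝ))) = Matrix.diagonal fun j => Real.exp (y j) := by
    ext i k
    rcases eq_or_ne i k with rfl | hik
    · simp [LinearMap.toMatrix_apply, expD, Matrix.diagonal]
    · simp [LinearMap.toMatrix_apply, expD, Matrix.diagonal_apply_ne' _ (Ne.symm hik),
        Pi.single_apply, hik]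
  have := LinearMap.det_toMatrix (Pi.basisFun ℝ (Fin m))
    ((expD y : (Fin m → ℝ) →ₗ[ℝ] (Fin m → ℝ)))
  rw [ContinuousLinearMap.det, ← this, h, Matrix.det_diagonal, ← Real.exp_sum]

/-- Key derivative computation. -/
lemma pd_log_key {m : ℕ} (p q : (Fin m → ℝ) → ℝ) (Ω : Set (Fin m → ℝ))
    (hΩ : Ω = Set.univ.pi fun _ : Fin m => Ioi (0:ℝ))
    (hps : ContDiffOn ℝ 1 p Ω) (hpos : ∀ x ∈ Ω, 0 < p x)
    (hq : ∀ y, q y = p (fun j => Real.exp (y j)) * Real.exp (∑ j, y j))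
    (y : Fin m → ℝ) (j : Fin m) :
    pd (fun z => Real.log (q z)) j y
      = pd (fun z => Real.log (p z)) j (fun k => Real.exp (y k)) * Real.exp (y j) + 1 := by
  set x : Fin m → ℝ := fun k => Real.exp (y k) with hx
  have hopen : IsOpen Ω := by
    rw [hΩ]; exact isOpen_set_pi finite_univ fun _ _ => isOpen_Ioi
  have hmem : ∀ t : ℝ, 0 < t → Function.update x j t ∈ Ω := by
    intro t ht
    rw [hΩ]
    intro k _
    rcases eq_or_ne k j with rfl | hk
    · simpa using ht
    · simp [Function.update_apply, hk, hx, Real.exp_pos]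
  have hxΩ : x ∈ Ω := by
    have := hmem (x j) (Real.exp_pos (y j))
    rwa [Function.update_eq_self] at this
  have hpx : 0 < p x := hpos x hxΩ
  have hdiff : DifferentiableAt ℝ p x :=
    ((hps.differentiableOn one_ne_zero) x hxΩ).differentiableAt (hopen.mem_nhds hxΩ)
  set L := fderiv ℝ p x with hL
  -- derivative of s ↦ p (update x j s) at x j
  have hh : HasDerivAt (fun s => p (Function.update x j s)) (L (Pi.single j 1)) (x j) := by
    have h1 : HasDerivAt (Function.update x j) (Pi.single j 1) (x j) := hasDerivAt_update x j (x j)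
    have h2 : HasFDerivAt p L (Function.update x j (x j)) := by
      rw [Function.update_eq_self]; exact hdiff.hasFDerivAt
    exact h2.comp_hasDerivAt (x j) h1
  have hpne : p (Function.update x j (x j)) ≠ 0 := by
    rw [Function.update_eq_self]; exact hpx.ne'
  have hlogp : HasDerivAt (fun s => Real.log (p (Function.update x j s)))
      (L (Pi.single j 1) / p x) (x j) := by
    have := hh.log hpne
    rwa [Function.update_eq_self] at this
  have hpdp : pd (fun z => Real.log (p z)) j x = L (Pi.single j 1) / p x := hlogp.deriv
  -- rewrite the q-side function
  have hfun : (fun t => Real.log (q (Function.update y j t)))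
      = fun t => Real.log (p (Function.update x j (Real.exp t))) + ((∑ k, y k) - y j + t) := by
    funext t
    have hupd : (fun k => Real.exp (Function.update y j t k)) = Function.update x j (Real.exp t) := by
      funext k
      rcases eq_or_ne k j with rfl | hk
      · simp
      · simp [Function.update_apply, hk, hx]
    have hsum : ∑ k, Function.update y j t k = (∑ k, y k) - y j + t := by
      rw [Finset.sum_update_of_mem (Finset.mem_univ j)]
      have : ∑ k ∈ Finset.univ \ {j}, y k = (∑ k, y k) - y j := by
        rw [Finset.sum_sdiff_eq_sub (Finset.subset_univ {j})]
        simp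
      rw [this]; ring
    rw [hq, hupd, hsum, Real.log_mul (hpos _ (hmem _ (Real.exp_pos t))).ne' (Real.exp_ne_zero _),
      Real.log_exp]
  have h1 : HasDerivAt (fun t => Real.log (p (Function.update x j (Real.exp t))))
      (L (Pi.single j 1) / p x * Real.exp (y j)) (y j) := by
    have hx_j : x j = Real.exp (y j) := rfl
    exact HasDerivAt.comp (y j) (hx_j ▸ hlogp) (Real.hasDerivAt_exp (y j))
  have h2 : HasDerivAt (fun t : ℝ => (∑ k, y k) - y j + t) 1 (y j) :=
    (hasDerivAt_id (y j)).const_add _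
  have : pd (fun z => Real.log (q z)) j y = L (Pi.single j 1) / p x * Real.exp (y j) + 1 := by
    rw [pd, hfun]
    exact (h1.add h2).deriv
  rw [this, hpdp]

/-- Log-transforming positive data and applying original score matching is equivalent
to non-negative score matching: with `q₀, q` the densities of the coordinatewise logs
of data with densities `p₀, p` on `(0,∞)^m`, the original score matching loss of `q`
relative to `q₀` over `ℝ^m` equals the non-negative score matching loss
`∫ p₀(x) ∑_j x_j² (∂_j log p(x) - ∂_j log p₀(x))² dx` (either side may be `+∞`). -/
theorem stmt15 {m : ℕ} (p0 p : (Fin m → ℝ) → ℝ)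
    (Ω : Set (Fin m → ℝ)) (hΩ : Ω = Set.univ.pi fun _ : Fin m => Ioi (0:ℝ))
    (hp0smooth : ContDiffOn ℝ 1 p0 Ω) (hpsmooth : ContDiffOn ℝ 1 p Ω)
    (hp0pos : ∀ x ∈ Ω, 0 < p0 x) (hppos : ∀ x ∈ Ω, 0 < p x)
    (hp0one : ∫ x in Ω, p0 x = 1) (hpone : ∫ x in Ω, p x = 1)
    (q0 q : (Fin m → ℝ) → ℝ)
    (hq0 : ∀ y, q0 y = p0 (fun j => Real.exp (y j)) * Real.exp (∑ j, y j))
    (hq : ∀ y, q y = p (fun j => Real.exp (y j)) * Real.exp (∑ j, y j)) :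
    ∫⁻ y, ENNReal.ofReal (q0 y * ∑ j,
        (pd (fun z => Real.log (q z)) j y - pd (fun z => Real.log (q0 z)) j y) ^ 2)
      = ∫⁻ x in Ω, ENNReal.ofReal (p0 x * ∑ j, (x j)^2 *
          (pd (fun z => Real.log (p z)) j x - pd (fun z => Real.log (p0 z)) j x) ^ 2) := by
  set φ : (Fin m → ℝ) → (Fin m → ℝ) := fun y j => Real.exp (y j) with hφ
  have himg : φ '' Set.univ = Ω := by
    rw [hΩ]
    ext x
    constructor
    · rintro ⟨y, -, rfl⟩
      intro k _
      exact Real.exp_pos (y k)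
    · intro hx
      refine ⟨fun j => Real.log (x j), mem_univ _, ?_⟩
      funext j
      exact Real.exp_log (hx j (mem_univ j))
  have hcv := lintegral_image_eq_lintegral_abs_det_fderiv_mul (μ := volume)
    (MeasurableSet.univ) (f := φ) (f' := fun y => expD y)
    (fun y _ => (expD_hasFDerivAt y).hasFDerivWithinAt)
    (fun a _ b _ h => funext fun j => Real.exp_injective (congrFun h j))
    (fun x => ENNReal.ofReal (p0 x * ∑ j, (x j)^2 *
      (pd (fun z => Real.log (p z)) j x - pd (fun z => Real.log (p0 z)) j x) ^ 2))
  rw [himg, Measure.restrict_univ] at hcv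
  rw [hcv]
  apply lintegral_congr
  intro y
  have hdet : |(expD y).det| = Real.exp (∑ j, y j) := by
    rw [expD_det, abs_of_pos (Real.exp_pos _)]
  rw [hdet, ← ENNReal.ofReal_mul (Real.exp_pos _).le]
  congr 1
  have hkey : ∀ j, pd (fun z => Real.log (q z)) j y - pd (fun z => Real.log (q0 z)) j y
      = (pd (fun z => Real.log (p z)) j (φ y) - pd (fun z => Real.log (p0 z)) j (φ y))
        * Real.exp (y j) := by
    intro j
    rw [pd_log_key p q Ω hΩ hpsmooth hppos hq y j,
      pd_log_key p0 q0 Ω hΩ hp0smooth hp0pos hq0 y j]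
    ring
  have hsum : ∑ j, (pd (fun z => Real.log (q z)) j y - pd (fun z => Real.log (q0 z)) j y) ^ 2
      = ∑ j, (φ y j) ^ 2 * (pd (fun z => Real.log (p z)) j (φ y)
          - pd (fun z => Real.log (p0 z)) j (φ y)) ^ 2 := by
    refine Finset.sum_congr rfl fun j _ => ?_
    rw [hkey j]
    have : φ y j = Real.exp (y j) := rfl
    rw [this]; ring
  rw [hq0 y, hsum]
  have : (fun j => Real.exp (y j)) = φ y := rfl
  rw [this]
  ring
end

section
/- Let $K\in\mathbb{R}^{m\times m}$ be symmetric and let $p_K(x)\propto\exp(-\tfrac12 x^\top Kx)$ on $(0,\infty)^m$. Given data $\mathbf{x}\in\mathbb{R}^{n\times m}$ with rows $X^{(1)},\dots,X^{(n)}\in(0,\infty)^m$ and differentiable $h_1,\dots,h_m:(0,\infty)\to[0,\infty)$, the empirical generalized $h$-score matching loss satisfies, for every symmetric $K$, $\hat J_h(p_K)=\tfrac12\,\mathrm{vec}(K)^\top\Gamma(\mathbf{x})\,\mathrm{vec}(K)-g(\mathbf{x})^\top\mathrm{vec}(K)$, where $\Gamma(\mathbf{x})\in\mathbb{R}^{m^2\times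 m^2}$ is block-diagonal with $j$-th $m\times m$ block $\frac1n\mathbf{x}^\top\mathrm{diag}\big(h_j(X_j^{(1)}),\dots,h_j(X_j^{(n)})\big)\mathbf{x}$, and $g(\mathbf{x})\in\mathbb{R}^{m^2}$ has entries $g_{(j,k)}=\frac1n\sum_{i=1}^n h_j'(X_j^{(i)})X_k^{(i)}+\mathbf{1}\{j=k\}\cdot\frac1n\sum_{i=1}^n h_j(X_j^{(i)})$. -/
open MeasureTheory Set Matrix

lemma sdp_aux {m : ℕ} (v : Fin m → ℝ) (j : Fin m) :
    Pi.single j (1:ℝ) ⬝ᵥ v = v j := by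
  simp [dotProduct, Pi.single_apply]

/-- Quadratic expansion of `xᵀKx` along the `j`-th coordinate. -/
lemma quadexp {m : ℕ} (K : Matrix (Fin m) (Fin m) ℝ) (x : Fin m → ℝ) (j : Fin m) (t : ℝ) :
    (Function.update x j t) ⬝ᵥ K.mulVec (Function.update x j t)
      = (x ⬝ᵥ K.mulVec x)
        + (t - x j) * (x ⬝ᵥ K.mulVec (Pi.single j 1 : Fin m → ℝ))
        + (t - x j) * (K.mulVec x j)
        + (t - x j)^2 * (K j j) := by
  have hupd : Function.update x j t = x + (t - x j) • (Pi.single j 1 : Fin m → ℝ) := by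
    funext a
    rcases eq_or_ne a j with rfl | hne
    · simp
    · simp [Function.update_of_ne hne, Pi.single_apply, hne]
  have h1 : Pi.single j (1:ℝ) ⬝ᵥ K.mulVec x = K.mulVec x j := sdp_aux _ _
  have h2 : Pi.single j (1:ℝ) ⬝ᵥ K.mulVec (Pi.single j (1:ℝ)) = K j j := by
    rw [sdp_aux]
    simp [mulVec, dotProduct, Pi.single_apply]
  rw [hupd]
  simp only [add_dotProduct, dotProduct_add, mulVec_add, mulVec_smul, dotProduct_smul,
    smul_dotProduct, smul_eq_mul, Pi.smul_apply, h1, h2]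
  ring

lemma hasDeriv_main {m : ℕ} (K : Matrix (Fin m) (Fin m) ℝ) (ψK : ℝ) (x : Fin m → ℝ)
    (j : Fin m) (t : ℝ) :
    HasDerivAt (fun t => -(1/2) * ((Function.update x j t) ⬝ᵥ K.mulVec (Function.update x j t)) - ψK)
      (-(1/2) * ((x ⬝ᵥ K.mulVec (Pi.single j 1 : Fin m → ℝ)) + (K.mulVec x j)
        + 2*(t - x j) * K j j)) t := by
  have hfun : (fun t => -(1/2) * ((Function.update x j t) ⬝ᵥ K.mulVec (Function.update x j t)) - ψK)
      = fun t => -(1/2) * ((x ⬝ᵥ K.mulVec x)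
        + (t - x j) * (x ⬝ᵥ K.mulVec (Pi.single j 1 : Fin m → ℝ))
        + (t - x j) * (K.mulVec x j)
        + (t - x j)^2 * (K j j)) - ψK := by
    funext s; rw [quadexp]
  rw [hfun]
  set p := x ⬝ᵥ K.mulVec (Pi.single j 1 : Fin m → ℝ)
  set q := K.mulVec x j
  have h0 : HasDerivAt (fun s : ℝ => s - x j) 1 t := (hasDerivAt_id t).sub_const _
  have h1 : HasDerivAt (fun s : ℝ => (s - x j) * p) p t := by simpa using h0.mul_const p
  have h2 : HasDerivAt (fun s : ℝ => (s - x j) * q) q t := by simpa using h0.mul_const q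
  have h3 : HasDerivAt (fun s : ℝ => (s - x j)^2 * K j j) (2*(t - x j) * K j j) t := by
    have := (h0.pow 2).mul_const (K j j)
    simpa using this
  have := ((((hasDerivAt_const t (x ⬝ᵥ K.mulVec x)).add h1).add h2).add h3).const_mul (-(1/2) : ℝ)
  have := this.sub_const ψK
  refine this.congr_deriv ?_
  ring

lemma pd_eq {m : ℕ} (K : Matrix (Fin m) (Fin m) ℝ) (hK : K.IsSymm) (ψK : ℝ)
    (x : Fin m → ℝ) (j : Fin m) :
    pd (fun x => -(1/2) * (x ⬝ᵥ K.mulVec x) - ψK) j x = -(K.mulVec x j) := by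
  have hp : x ⬝ᵥ K.mulVec (Pi.single j 1 : Fin m → ℝ) = K.mulVec x j := by
    simp only [mulVec, dotProduct, Pi.single_apply, mul_ite, mul_one, mul_zero,
      Finset.sum_ite_eq', Finset.mem_univ, if_true]
    refine Finset.sum_congr rfl fun a _ => ?_
    rw [← hK.apply a j]
    ring
  have := (hasDeriv_main K ψK x j (x j)).deriv
  unfold pd
  rw [this, hp]
  ring

lemma pd2_eq {m : ℕ} (K : Matrix (Fin m) (Fin m) ℝ) (ψK : ℝ)
    (x : Fin m → ℝ) (j : Fin m) :
    pd2 (fun x => -(1/2) * (x ⬝ᵥ K.mulVec x) - ψK) j x = -(K j j) := by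
  unfold pd2
  have hder : deriv (fun t => -(1/2) * ((Function.update x j t) ⬝ᵥ K.mulVec (Function.update x j t)) - ψK)
      = fun t => -(1/2) * ((x ⬝ᵥ K.mulVec (Pi.single j 1 : Fin m → ℝ)) + (K.mulVec x j)
        + 2*(t - x j) * K j j) := by
    funext t; exact (hasDeriv_main K ψK x j t).deriv
  rw [hder]
  set p := x ⬝ᵥ K.mulVec (Pi.single j 1 : Fin m → ℝ)
  set q := K.mulVec x j
  have h0 : HasDerivAt (fun s : ℝ => p + q + 2*(s - x j) * K j j) (2 * K j j) (x j) := by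
    have h1 : HasDerivAt (fun s : ℝ => s - x j) 1 (x j) := (hasDerivAt_id _).sub_const _
    have h2 := (h1.const_mul (2:ℝ)).mul_const (K j j)
    have := (hasDerivAt_const (x j) (p + q)).add h2
    refine this.congr_deriv ?_
    ring
  have := (h0.const_mul (-(1/2) : ℝ)).deriv
  rw [this]
  ring

lemma swap4 {m n : ℕ} (f : Fin m → Fin m → Fin m → Fin n → ℝ) :
    ∑ j, ∑ k, ∑ l, ∑ i, f j k l i = ∑ i, ∑ j, ∑ k, ∑ l, f j k l i := by
  calc ∑ j, ∑ k, ∑ l, ∑ i, f j k l i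
      = ∑ j, ∑ k, ∑ i, ∑ l, f j k l i :=
        Finset.sum_congr rfl fun _ _ => Finset.sum_congr rfl fun _ _ => Finset.sum_comm
    _ = ∑ j, ∑ i, ∑ k, ∑ l, f j k l i :=
        Finset.sum_congr rfl fun _ _ => Finset.sum_comm
    _ = ∑ i, ∑ j, ∑ k, ∑ l, f j k l i := Finset.sum_comm

lemma swap3 {m n : ℕ} (f : Fin m → Fin m → Fin n → ℝ) :
    ∑ j, ∑ k, ∑ i, f j k i = ∑ i, ∑ j, ∑ k, f j k i := by
  calc ∑ j, ∑ k, ∑ i, f j k i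
      = ∑ j, ∑ i, ∑ k, f j k i := Finset.sum_congr rfl fun _ _ => Finset.sum_comm
    _ = ∑ i, ∑ j, ∑ k, f j k i := Finset.sum_comm

lemma sumA {m n : ℕ} (X : Fin n → Fin m → ℝ) (h : Fin m → ℝ → ℝ)
    (K : Matrix (Fin m) (Fin m) ℝ) :
    (∑ a : Fin m × Fin m, ∑ b : Fin m × Fin m,
      K a.2 a.1 * (if a.1 = b.1 then (1/(n:ℝ)) * ∑ i, h a.1 (X i a.1) * X i a.2 * X i b.2 else 0) * K b.2 b.1)
    = (1/(n:ℝ)) * ∑ i, ∑ j, h j (X i j) * (∑ k, K k j * X i k)^2 := by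
  simp only [Fintype.sum_prod_type, mul_ite, ite_mul, mul_zero, zero_mul,
    Finset.sum_ite_irrel, Finset.sum_const_zero, Finset.sum_ite_eq, Finset.mem_univ, if_true]
  have step1 : ∀ j k l : Fin m, K k j * (1/(n:ℝ) * ∑ i, h j (X i j) * X i k * X i l) * K l j
      = ∑ i, (1/(n:ℝ)) * (h j (X i j) * (K k j * X i k) * (K l j * X i l)) := by
    intro j k l
    simp only [Finset.mul_sum, Finset.sum_mul]
    exact Finset.sum_congr rfl fun i _ => by ring
  simp only [step1]
  rw [swap4, Finset.mul_sum]
  refine Finset.sum_congr rfl fun i _ => ?_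
  rw [Finset.mul_sum]
  refine Finset.sum_congr rfl fun j _ => ?_
  rw [pow_two, Finset.sum_mul_sum]
  simp only [Finset.mul_sum]
  refine Finset.sum_congr rfl fun k _ => Finset.sum_congr rfl fun l _ => by ring

lemma sumB {m n : ℕ} (X : Fin n → Fin m → ℝ) (h : Fin m → ℝ → ℝ)
    (K : Matrix (Fin m) (Fin m) ℝ) :
    (∑ a : Fin m × Fin m,
      ((1/(n:ℝ)) * ∑ i, deriv (h a.1) (X i a.1) * X i a.2
        + if a.1 = a.2 then (1/(n:ℝ)) * ∑ i, h a.1 (X i a.1) else 0) * K a.2 a.1)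
    = (1/(n:ℝ)) * ∑ i, ∑ j,
        (deriv (h j) (X i j) * (∑ k, K k j * X i k) + h j (X i j) * K j j) := by
  simp only [Fintype.sum_prod_type, add_mul, ite_mul, zero_mul, Finset.sum_add_distrib,
    Finset.sum_ite_eq, Finset.mem_univ, if_true]
  have step1 : ∀ j k : Fin m, (1/(n:ℝ) * ∑ i, deriv (h j) (X i j) * X i k) * K k j
      = ∑ i, (1/(n:ℝ)) * (deriv (h j) (X i j) * (K k j * X i k)) := by
    intro j k
    simp only [Finset.mul_sum, Finset.sum_mul]
    exact Finset.sum_congr rfl fun i _ => by ring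
  simp only [step1, swap3]
  have step2 : ∀ j : Fin m, (1/(n:ℝ) * ∑ i, h j (X i j)) * K j j
      = ∑ i, (1/(n:ℝ)) * (h j (X i j) * K j j) := by
    intro j
    simp only [Finset.mul_sum, Finset.sum_mul]
    exact Finset.sum_congr rfl fun i _ => by ring
  simp only [step2]
  rw [mul_add]
  refine congrArg₂ (· + ·) ?_ ?_
  · rw [Finset.mul_sum]
    refine Finset.sum_congr rfl fun i _ => ?_
    rw [Finset.mul_sum]
    refine Finset.sum_congr rfl fun j _ => ?_
    rw [Finset.mul_sum, Finset.mul_sum]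
  · have hc : (∑ x : Fin m, ∑ i : Fin n, 1/(n:ℝ) * (h x (X i x) * K x x))
        = ∑ i : Fin n, ∑ x : Fin m, 1/(n:ℝ) * (h x (X i x) * K x x) := Finset.sum_comm
    rw [hc, Finset.mul_sum]
    exact Finset.sum_congr rfl fun i _ => by rw [Finset.mul_sum]

/-- For the truncated centered Gaussian family `p_K(x) ∝ exp(-½ xᵀKx)` on `(0,∞)^m`,
the empirical generalized `h`-score matching loss is, for every symmetric `K`, the
quadratic `½ vec(K)ᵀ Γ(x) vec(K) - g(x)ᵀ vec(K)` in `vec(K)`, where `Γ(x)` is block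
diagonal with `j`-th block `n⁻¹ xᵀ diag(h_j(X_j^{(1)}),…,h_j(X_j^{(n)})) x` and
`g(x)_{(j,k)} = n⁻¹ ∑ᵢ h_j'(X_j^{(i)}) X_k^{(i)} + 1{j=k} · n⁻¹ ∑ᵢ h_j(X_j^{(i)})`.
Here `vec(K)` is indexed by pairs `(j,k)` with `vec(K)_{(j,k)} = K_{kj}`, and `ψK` is
the (parameter-dependent, `x`-independent) log-normalizing constant. -/
theorem stmt16 {m n : ℕ} (X : Fin n → Fin m → ℝ) (hX : ∀ i j, 0 < X i j)
    (h : Fin m → ℝ → ℝ) (hhdiff : ∀ j, DifferentiableOn ℝ (h j) (Ioi 0))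
    (hhnonneg : ∀ j, ∀ s ∈ Ioi (0:ℝ), 0 ≤ h j s)
    (Γ : Matrix (Fin m × Fin m) (Fin m × Fin m) ℝ)
    (hΓ : ∀ a b : Fin m × Fin m, Γ a b
      = if a.1 = b.1 then (1/(n:ℝ)) * ∑ i, h a.1 (X i a.1) * X i a.2 * X i b.2 else 0)
    (g : Fin m × Fin m → ℝ)
    (hg : ∀ a : Fin m × Fin m, g a
      = (1/(n:ℝ)) * ∑ i, deriv (h a.1) (X i a.1) * X i a.2
        + if a.1 = a.2 then (1/(n:ℝ)) * ∑ i, h a.1 (X i a.1) else 0) :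
    ∀ K : Matrix (Fin m) (Fin m) ℝ, K.IsSymm → ∀ ψK : ℝ,
      -- empirical generalized h-score matching loss of `log p_K(x) = -½ xᵀKx - ψK`
      (1/(n:ℝ)) * ∑ i, ∑ j,
          (deriv (h j) (X i j)
              * pd (fun x => -(1/2) * (x ⬝ᵥ K.mulVec x) - ψK) j (X i)
            + h j (X i j) *
              (pd2 (fun x => -(1/2) * (x ⬝ᵥ K.mulVec x) - ψK) j (X i)
                + (1/2) * (pd (fun x => -(1/2) * (x ⬝ᵥ K.mulVec x) - ψK) j (X i)) ^ 2))
      = (1/2) * (∑ a : Fin m × Fin m, ∑ b : Fin m × Fin m,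
            K a.2 a.1 * Γ a b * K b.2 b.1)
        - ∑ a : Fin m × Fin m, g a * K a.2 a.1 := by
  intro K hK ψK
  have hMv : ∀ (x : Fin m → ℝ) (j : Fin m), K.mulVec x j = ∑ k, K k j * x k := by
    intro x j
    simp only [mulVec, dotProduct]
    refine Finset.sum_congr rfl fun k _ => ?_
    rw [← hK.apply k j]
  simp only [pd_eq K hK ψK, pd2_eq K ψK, hMv, hΓ, hg]
  rw [sumA X h K, sumB X h K]
  have hring : ∀ S1 S2 : ℝ, (1/2:ℝ) * ((1/(n:ℝ)) * S1) - (1/(n:ℝ)) * S2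
      = (1/(n:ℝ)) * ((1/2) * S1 - S2) := fun _ _ => by ring
  rw [hring]
  congr 1
  rw [Finset.mul_sum, ← Finset.sum_sub_distrib]
  refine Finset.sum_congr rfl fun i _ => ?_
  rw [Finset.mul_sum, ← Finset.sum_sub_distrib]
  refine Finset.sum_congr rfl fun j _ => ?_
  ring
end
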